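/- arXiv:2301.13585 — 9 statements merged into one kernel-verified Lean document; each statement's English description precedes it below -/
import Mathlib

section
/- Under the MCAR assumption (the pair (X,Y) is independent of the mask P), for every θ ∈ ℝ^d the risk on zero-imputed data decomposes as R_imp(θ) = R(Hθ) + ‖θ‖²_{V⊙Σ}, where R(θ) = E[(Y − θᵀX)²], R_imp(θ) = E[(Y − θᵀ(P⊙X))²], H = diag(ρ_1,…,ρ_d) with ρ_j = P(P_j = 1), V is the covariance matrix of P, and Σ = E[XXᵀ]. -/
/-!
Expanding the square, the risk of a linear predictor `c` on features `Z` is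
`E[Y²] - 2 cᵀ E[Y Z] + cᵀ E[Z Zᵀ] c`. For `Z = P ⊙ X` with `P` independent of `(X, Y)`, the moments
factor: `E[Y (P ⊙ X)] = ρ ⊙ E[Y X]` and `E[(P ⊙ X)(P ⊙ X)ᵀ] = E[P Pᵀ] ⊙ Σ = (V + ρ ρᵀ) ⊙ Σ`.
The `ρ ρᵀ ⊙ Σ` part is the quadratic term of the risk of `Hθ`, and `V ⊙ Σ` is left over.
-/

open MeasureTheory ProbabilityTheory Matrix

section SquareLoss

variable {Ω ι : Type*} {mΩ : MeasurableSpace Ω} {μ : Measure Ω} [Fintype ι]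

noncomputable def crossMoment (μ : Measure Ω) (Y : Ω → ℝ) (Z : Ω → ι → ℝ) : ι → ℝ :=
  fun j => ∫ ω, Y ω * Z ω j ∂μ

noncomputable def secondMoment (μ : Measure Ω) (Z : Ω → ι → ℝ) : Matrix ι ι ℝ :=
  of fun i j => ∫ ω, Z ω i * Z ω j ∂μ

-- The right-hand side is shaped so that, once integrated, it unfolds to `c ⬝ᵥ b` and `c ⬝ᵥ M *ᵥ c`.
lemma sq_sub_sum_mul (y : ℝ) (z c : ι → ℝ) :
    (y - ∑ j, c j * z j) ^ 2 =
      y ^ 2 - 2 * ∑ j, c j * (y * z j) + ∑ i, c i * ∑ j, z i * z j * c j := by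
  have hlin : ∑ j, c j * (y * z j) = y * ∑ j, c j * z j := by
    rw [Finset.mul_sum]; exact Finset.sum_congr rfl fun j _ => by ring
  have hquad : ∑ i, c i * ∑ j, z i * z j * c j = (∑ i, c i * z i) * ∑ j, c j * z j := by
    rw [Finset.sum_mul_sum]
    refine Finset.sum_congr rfl fun i _ => ?_
    rw [Finset.mul_sum]
    exact Finset.sum_congr rfl fun j _ => by ring
  rw [hlin, hquad]; ring

theorem integral_sq_sub_sum_mul {Y : Ω → ℝ} {Z : Ω → ι → ℝ} (hY : MemLp Y 2 μ)
    (hZ : ∀ j, MemLp (fun ω => Z ω j) 2 μ) (c : ι → ℝ) :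
    ∫ ω, (Y ω - ∑ j, c j * Z ω j) ^ 2 ∂μ =
      ∫ ω, Y ω ^ 2 ∂μ - 2 * c ⬝ᵥ crossMoment μ Y Z + c ⬝ᵥ secondMoment μ Z *ᵥ c := by
  have hYZ (j : ι) : Integrable (fun ω => c j * (Y ω * Z ω j)) μ :=
    (hY.integrable_mul (hZ j)).const_mul (c j)
  have hZZ (i j : ι) : Integrable (fun ω => Z ω i * Z ω j * c j) μ :=
    ((hZ i).integrable_mul (hZ j)).mul_const (c j)
  have hZZ' (i : ι) : Integrable (fun ω => c i * ∑ j, Z ω i * Z ω j * c j) μ :=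
    (integrable_finsetSum _ fun j _ => hZZ i j).const_mul (c i)
  simp_rw [sq_sub_sum_mul]
  rw [integral_add _ (integrable_finsetSum _ fun i _ => hZZ' i), integral_sub hY.integrable_sq,
    integral_const_mul, integral_finsetSum _ fun j _ => hYZ j,
    integral_finsetSum _ fun i _ => hZZ' i]
  · simp only [dotProduct, mulVec, crossMoment, secondMoment, of_apply, integral_const_mul,
      integral_finsetSum _ fun j _ => hZZ _ j, integral_mul_const]
  · exact (integrable_finsetSum _ fun j _ => hYZ j).const_mul 2
  · exact hY.integrable_sq.sub ((integrable_finsetSum _ fun j _ => hYZ j).const_mul 2)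

end SquareLoss

section Masks

variable {Ω ι : Type*} {mΩ : MeasurableSpace Ω} {μ : Measure Ω}

lemma integral_eq_measureReal_of_zero_or_one {m : Ω → ℝ} (hm : Measurable m)
    (h01 : ∀ ω, m ω = 0 ∨ m ω = 1) : ∫ ω, m ω ∂μ = μ.real {ω | m ω = 1} := by
  have hind : m = {ω | m ω = 1}.indicator 1 := by
    funext ω
    rcases h01 ω with h | h <;> simp [h]
  conv_lhs => rw [hind]
  exact integral_indicator_one (hm (measurableSet_singleton 1))

lemma MeasureTheory.MemLp.mul_of_zero_or_one {p : ENNReal} {m g : Ω → ℝ} (hg : MemLp g p μ)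
    (hm : AEStronglyMeasurable m μ) (h01 : ∀ ω, m ω = 0 ∨ m ω = 1) :
    MemLp (fun ω => m ω * g ω) p μ :=
  hg.mono (hm.mul hg.1) <| .of_forall fun ω => by rcases h01 ω with h | h <;> simp [h]

variable {X : Ω → ι → ℝ} {Y : Ω → ℝ} {P : Ω → ι → ℝ}

lemma crossMoment_mul_of_indepFun (hMCAR : IndepFun (fun ω => (X ω, Y ω)) P μ)
    (hX : ∀ j, AEStronglyMeasurable (fun ω => X ω j) μ) (hY : AEStronglyMeasurable Y μ)
    (hP : Measurable P) :
    crossMoment μ Y (fun ω j => P ω j * X ω j) = (fun j => ∫ ω, P ω j ∂μ) * crossMoment μ Y X := by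
  funext j
  have hind : IndepFun (fun ω => Y ω * X ω j) (fun ω => P ω j) μ :=
    hMCAR.comp (φ := fun q : (ι → ℝ) × ℝ => q.2 * q.1 j) (ψ := fun p : ι → ℝ => p j)
      (by fun_prop) (measurable_pi_apply j)
  simp only [crossMoment, Pi.mul_apply]
  rw [mul_comm, ← hind.integral_fun_mul_eq_mul_integral (hY.mul (hX j)) (by fun_prop)]
  exact integral_congr_ae (.of_forall fun ω => by ring)

lemma secondMoment_mul_of_indepFun (hMCAR : IndepFun (fun ω => (X ω, Y ω)) P μ)
    (hX : ∀ j, AEStronglyMeasurable (fun ω => X ω j) μ) (hP : Measurable P) :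
    secondMoment μ (fun ω j => P ω j * X ω j) = secondMoment μ P ⊙ secondMoment μ X := by
  ext i j
  have hind : IndepFun (fun ω => X ω i * X ω j) (fun ω => P ω i * P ω j) μ :=
    hMCAR.comp (φ := fun q : (ι → ℝ) × ℝ => q.1 i * q.1 j) (ψ := fun p : ι → ℝ => p i * p j)
      (by fun_prop) (by fun_prop)
  simp only [secondMoment, hadamard_apply, of_apply]
  rw [mul_comm, ← hind.integral_fun_mul_eq_mul_integral ((hX i).mul (hX j)) (by fun_prop)]
  exact integral_congr_ae (.of_forall fun ω => by ring)

end Masks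

section QuadraticForms

variable {ι : Type*} [Fintype ι]

lemma dotProduct_mul_eq_mul_dotProduct (θ ρ b : ι → ℝ) :
    θ ⬝ᵥ (ρ * b) = (ρ * θ) ⬝ᵥ b := by
  simp only [dotProduct, Pi.mul_apply]
  exact Finset.sum_congr rfl fun j _ => by ring

lemma dotProduct_vecMulVec_hadamard_mulVec (θ ρ : ι → ℝ) (A : Matrix ι ι ℝ) :
    θ ⬝ᵥ (vecMulVec ρ ρ ⊙ A) *ᵥ θ = (ρ * θ) ⬝ᵥ A *ᵥ (ρ * θ) := by
  simp only [dotProduct, mulVec, hadamard_apply, vecMulVec_apply, Pi.mul_apply, Finset.mul_sum]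
  exact Finset.sum_congr rfl fun i _ => Finset.sum_congr rfl fun j _ => by ring

end QuadraticForms

theorem stmt4_general {Ω : Type*} {mΩ : MeasurableSpace Ω} (μ : Measure Ω)
    {d : ℕ} (X : Ω → Fin d → ℝ) (Y : Ω → ℝ) (P : Ω → Fin d → ℝ)
    (hPm : Measurable P)
    (hX2 : ∀ j, MemLp (fun ω => X ω j) 2 μ) (hY2 : MemLp Y 2 μ)
    (hP01 : ∀ ω j, P ω j = 0 ∨ P ω j = 1)
    (hMCAR : IndepFun (fun ω => (X ω, Y ω)) P μ)
    (ρ : Fin d → ℝ) (hρ : ∀ j, ρ j = (μ {ω | P ω j = 1}).toReal)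
    (V : Matrix (Fin d) (Fin d) ℝ)
    (hV : V = Matrix.of fun i j => ∫ ω, P ω i * P ω j ∂μ - ρ i * ρ j)
    (Sig : Matrix (Fin d) (Fin d) ℝ)
    (hSig : Sig = Matrix.of fun i j => ∫ ω, X ω i * X ω j ∂μ)
    (θ : Fin d → ℝ) :
    ∫ ω, (Y ω - ∑ j, θ j * (P ω j * X ω j)) ^ 2 ∂μ =
      (∫ ω, (Y ω - ∑ j, (ρ j * θ j) * X ω j) ^ 2 ∂μ) +
        θ ⬝ᵥ (V.hadamard Sig).mulVec θ := by
  have hX := fun j => (hX2 j).aestronglyMeasurable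
  have hmean : (fun j => ∫ ω, P ω j ∂μ) = ρ := funext fun j =>
    (integral_eq_measureReal_of_zero_or_one (by fun_prop) (hP01 · j)).trans (hρ j).symm
  have hPP : secondMoment μ P = V + vecMulVec ρ ρ := by
    ext i j; simp [hV, secondMoment, vecMulVec_apply]
  have hRimp := integral_sq_sub_sum_mul hY2
    (fun j => (hX2 j).mul_of_zero_or_one (by fun_prop) (hP01 · j)) θ
  have hR := integral_sq_sub_sum_mul hY2 hX2 (ρ * θ)
  rw [crossMoment_mul_of_indepFun hMCAR hX hY2.1 hPm, secondMoment_mul_of_indepFun hMCAR hX hPm,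
    hmean, hPP] at hRimp
  simp only [Pi.mul_apply] at hRimp hR
  rw [hRimp, hR, add_hadamard, add_mulVec, dotProduct_add, dotProduct_vecMulVec_hadamard_mulVec,
    dotProduct_mul_eq_mul_dotProduct, show Sig = secondMoment μ X from hSig]
  ring

theorem stmt4 {Ω : Type*} {mΩ : MeasurableSpace Ω} (μ : Measure Ω) [IsProbabilityMeasure μ]
    {d : ℕ} (X : Ω → Fin d → ℝ) (Y : Ω → ℝ) (P : Ω → Fin d → ℝ)
    (hXm : Measurable X) (hYm : Measurable Y) (hPm : Measurable P)
    (hX2 : ∀ j, MemLp (fun ω => X ω j) 2 μ) (hY2 : MemLp Y 2 μ)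
    (hP01 : ∀ ω j, P ω j = 0 ∨ P ω j = 1)
    (hMCAR : IndepFun (fun ω => (X ω, Y ω)) P μ)
    (ρ : Fin d → ℝ) (hρ : ∀ j, ρ j = (μ {ω | P ω j = 1}).toReal)
    (V : Matrix (Fin d) (Fin d) ℝ)
    (hV : V = Matrix.of fun i j => ∫ ω, P ω i * P ω j ∂μ - ρ i * ρ j)
    (Sig : Matrix (Fin d) (Fin d) ℝ)
    (hSig : Sig = Matrix.of fun i j => ∫ ω, X ω i * X ω j ∂μ)
    (θ : Fin d → ℝ) :
    ∫ ω, (Y ω - ∑ j, θ j * (P ω j * X ω j)) ^ 2 ∂μ =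
      (∫ ω, (Y ω - ∑ j, (ρ j * θ j) * X ω j) ^ 2 ∂μ) +
        θ ⬝ᵥ (V.hadamard Sig).mulVec θ :=
  stmt4_general (mΩ := mΩ) μ X Y P hPm hX2 hY2 hP01 hMCAR ρ hρ V hV Sig hSig θ
end

section
/- Assume the mask P has i.i.d. Bernoulli(ρ) components with 0 < ρ ≤ 1, independent of (X,Y), and E[X_j²] = L² for every j. Then for every θ ∈ ℝ^d, R_imp(θ) = R(ρθ) + L²ρ(1−ρ)‖θ‖₂², where R(θ) = E[(Y − θᵀX)²] and R_imp(θ) = E[(Y − θᵀ(P⊙X))²]. -/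
/-!
Write `Z = Y - (ρθ)ᵀX` for the residual at `ρθ`. Then the imputed residual is
`Y - θᵀ(P ⊙ X) = Z - ∑ⱼ θⱼ (Pⱼ - ρ) Xⱼ`, and the centred mask `P - ρ` is independent of `(X, Z)`,
has mean zero, and has uncorrelated coordinates of variance `ρ(1 - ρ)`. Expanding the square, the
cross term vanishes and the noise term collapses to its diagonal `∑ⱼ θⱼ² ρ(1 - ρ) E[Xⱼ²]`.
-/

open MeasureTheory ProbabilityTheory
open scoped ENNReal

section IndependentNoise

variable {Ω ι : Type*} {mΩ : MeasurableSpace Ω} {μ : Measure Ω} [Fintype ι]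
  {X W : Ω → ι → ℝ} {Z : Ω → ℝ}

lemma integral_mul_sum_indep_noise_eq_zero [IsFiniteMeasure μ]
    (hind : IndepFun (fun ω => (X ω, Z ω)) W μ)
    (hZ : MemLp Z 2 μ) (hX : ∀ j, MemLp (fun ω => X ω j) 2 μ)
    (hW : ∀ j, MemLp (fun ω => W ω j) 2 μ) (hW_mean : ∀ j, ∫ ω, W ω j ∂μ = 0) (c : ι → ℝ) :
    Integrable (fun ω => Z ω * ∑ j, c j * (W ω j * X ω j)) μ ∧
      ∫ ω, Z ω * ∑ j, c j * (W ω j * X ω j) ∂μ = 0 := by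
  have hterm : ∀ j, IndepFun (fun ω => W ω j) (fun ω => Z ω * X ω j) μ := fun j =>
    (hind.comp (φ := fun p : (ι → ℝ) × ℝ => p.2 * p.1 j) (by fun_prop) (measurable_pi_apply j)).symm
  have hint : ∀ j, Integrable (fun ω => W ω j * (Z ω * X ω j)) μ := fun j =>
    (hterm j).integrable_mul ((hW j).integrable one_le_two) (hZ.integrable_mul (hX j))
  have hpoint : ∀ ω, Z ω * ∑ j, c j * (W ω j * X ω j) = ∑ j, c j * (W ω j * (Z ω * X ω j)) :=
    fun ω => by rw [Finset.mul_sum]; exact Finset.sum_congr rfl fun j _ => by ring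
  simp_rw [hpoint]
  refine ⟨integrable_finsetSum _ fun j _ => (hint j).const_mul (c j), ?_⟩
  rw [integral_finsetSum _ fun j _ => (hint j).const_mul (c j)]
  refine Finset.sum_eq_zero fun j _ => ?_
  rw [integral_const_mul, (hterm j).integral_fun_mul_eq_mul_integral
    (hW j).aestronglyMeasurable ((hZ.integrable_mul (hX j)).aestronglyMeasurable), hW_mean j]
  simp

lemma integral_sum_indep_noise_sq (hind : IndepFun (fun ω => (X ω, Z ω)) W μ)
    (hX : ∀ j, MemLp (fun ω => X ω j) 2 μ) (hW : ∀ j, MemLp (fun ω => W ω j) 2 μ)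
    (hW_uncorr : Pairwise fun j k => ∫ ω, W ω j * W ω k ∂μ = 0) (c : ι → ℝ) :
    Integrable (fun ω => (∑ j, c j * (W ω j * X ω j)) ^ 2) μ ∧
      ∫ ω, (∑ j, c j * (W ω j * X ω j)) ^ 2 ∂μ =
        ∑ j, c j ^ 2 * (∫ ω, W ω j ^ 2 ∂μ) * ∫ ω, X ω j ^ 2 ∂μ := by
  have hterm : ∀ j k, IndepFun (fun ω => W ω j * W ω k) (fun ω => X ω j * X ω k) μ :=
    fun j k => (hind.comp (φ := fun p : (ι → ℝ) × ℝ => p.1 j * p.1 k)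
      (ψ := fun w : ι → ℝ => w j * w k) (by fun_prop) (by fun_prop)).symm
  have hint : ∀ j k, Integrable (fun ω => (W ω j * W ω k) * (X ω j * X ω k)) μ := fun j k =>
    (hterm j k).integrable_mul ((hW j).integrable_mul (hW k)) ((hX j).integrable_mul (hX k))
  have hpoint : ∀ ω, (∑ j, c j * (W ω j * X ω j)) ^ 2 =
      ∑ j, ∑ k, c j * c k * ((W ω j * W ω k) * (X ω j * X ω k)) := fun ω => by
    rw [sq, Finset.sum_mul_sum]
    exact Finset.sum_congr rfl fun j _ => Finset.sum_congr rfl fun k _ => by ring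
  simp_rw [hpoint]
  refine ⟨integrable_finsetSum _ fun j _ => integrable_finsetSum _ fun k _ =>
    (hint j k).const_mul _, ?_⟩
  rw [integral_finsetSum _ fun j _ => integrable_finsetSum _ fun k _ => (hint j k).const_mul _]
  refine Finset.sum_congr rfl fun j _ => ?_
  rw [integral_finsetSum _ fun k _ => (hint j k).const_mul _,
    Finset.sum_eq_single_of_mem j (Finset.mem_univ j) fun k _ hkj => ?_]
  · rw [integral_const_mul, (hterm j j).integral_fun_mul_eq_mul_integral
      ((hW j).integrable_mul (hW j)).aestronglyMeasurable
      ((hX j).integrable_mul (hX j)).aestronglyMeasurable]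
    simp only [← sq]
    ring
  · rw [integral_const_mul, (hterm j k).integral_fun_mul_eq_mul_integral
      ((hW j).integrable_mul (hW k)).aestronglyMeasurable
      ((hX j).integrable_mul (hX k)).aestronglyMeasurable, hW_uncorr (Ne.symm hkj)]
    simp

theorem integral_sq_add_indep_noise [IsFiniteMeasure μ]
    (hind : IndepFun (fun ω => (X ω, Z ω)) W μ)
    (hZ : MemLp Z 2 μ) (hX : ∀ j, MemLp (fun ω => X ω j) 2 μ)
    (hW : ∀ j, MemLp (fun ω => W ω j) 2 μ) (hW_mean : ∀ j, ∫ ω, W ω j ∂μ = 0)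
    (hW_uncorr : Pairwise fun j k => ∫ ω, W ω j * W ω k ∂μ = 0) (c : ι → ℝ) :
    ∫ ω, (Z ω + ∑ j, c j * (W ω j * X ω j)) ^ 2 ∂μ =
      ∫ ω, Z ω ^ 2 ∂μ + ∑ j, c j ^ 2 * (∫ ω, W ω j ^ 2 ∂μ) * ∫ ω, X ω j ^ 2 ∂μ := by
  obtain ⟨hcross_int, hcross⟩ := integral_mul_sum_indep_noise_eq_zero hind hZ hX hW hW_mean c
  obtain ⟨hsq_int, hsq⟩ := integral_sum_indep_noise_sq hind hX hW hW_uncorr c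
  have hZ2 : Integrable (fun ω => Z ω ^ 2) μ := hZ.integrable_sq
  have hlin : Integrable (fun ω => Z ω ^ 2 + 2 * (Z ω * ∑ j, c j * (W ω j * X ω j))) μ :=
    hZ2.add (hcross_int.const_mul 2)
  simp_rw [add_sq, mul_assoc (2 : ℝ)]
  rw [integral_add hlin hsq_int, integral_add hZ2 (hcross_int.const_mul 2), integral_const_mul,
    hcross, hsq]
  ring

end IndependentNoise

section ZeroOneValued

variable {Ω : Type*} {mΩ : MeasurableSpace Ω} {μ : Measure Ω} {B : Ω → ℝ}

lemma memLp_of_mem_zero_one [IsFiniteMeasure μ] (hB : AEStronglyMeasurable B μ)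
    (h01 : ∀ ω, B ω = 0 ∨ B ω = 1) (p : ℝ≥0∞) : MemLp B p μ :=
  MemLp.of_bound hB 1 (ae_of_all _ fun ω => by rcases h01 ω with h | h <;> simp [h])

lemma integral_eq_measureReal_of_mem_zero_one (hB : Measurable B)
    (h01 : ∀ ω, B ω = 0 ∨ B ω = 1) : ∫ ω, B ω ∂μ = μ.real {ω | B ω = 1} := by
  have hs : MeasurableSet {ω | B ω = 1} := hB (measurableSet_singleton 1)
  rw [← integral_indicator_one hs]
  congr with ω
  rcases h01 ω with h | h <;> simp [h]

lemma integral_sub_sq_of_mem_zero_one [IsProbabilityMeasure μ] (hB : AEStronglyMeasurable B μ)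
    (h01 : ∀ ω, B ω = 0 ∨ B ω = 1) {ρ : ℝ} (hmean : ∫ ω, B ω ∂μ = ρ) :
    ∫ ω, (B ω - ρ) ^ 2 ∂μ = ρ * (1 - ρ) := by
  have hpoint : ∀ ω, (B ω - ρ) ^ 2 = ρ ^ 2 - (2 * ρ - 1) * B ω := fun ω => by
    rcases h01 ω with h | h <;> rw [h] <;> ring
  have hBint : Integrable B μ := (memLp_of_mem_zero_one hB h01 1).integrable le_rfl
  simp_rw [hpoint]
  rw [integral_sub (integrable_const _) (hBint.const_mul _), integral_const_mul, hmean,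
    integral_const, probReal_univ, one_smul]
  ring

end ZeroOneValued

lemma sub_sum_mul_mul_eq_add_sum_mul_sub {ι : Type*} (s : Finset ι) (y ρ : ℝ) (θ p x : ι → ℝ) :
    y - ∑ j ∈ s, θ j * (p j * x j) =
      (y - ∑ j ∈ s, ρ * θ j * x j) + ∑ j ∈ s, -θ j * ((p j - ρ) * x j) := by
  have hnoise : ∑ j ∈ s, -θ j * ((p j - ρ) * x j) =
      ∑ j ∈ s, ρ * θ j * x j - ∑ j ∈ s, θ j * (p j * x j) := by
    rw [← Finset.sum_sub_distrib]
    exact Finset.sum_congr rfl fun j _ => by ring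
  rw [hnoise]
  ring

theorem stmt5_general {Ω : Type*} {mΩ : MeasurableSpace Ω} (μ : Measure Ω) [IsProbabilityMeasure μ]
    {d : ℕ} (X : Ω → Fin d → ℝ) (Y : Ω → ℝ) (P : Ω → Fin d → ℝ)
    (hPm : Measurable P)
    (hX2 : ∀ j, MemLp (fun ω => X ω j) 2 μ) (hY2 : MemLp Y 2 μ)
    (hP01 : ∀ ω j, P ω j = 0 ∨ P ω j = 1)
    (ρ : ℝ)
    (hρ : ∀ j, (μ {ω | P ω j = 1}).toReal = ρ)
    (hiid : iIndepFun (fun j ω => P ω j) μ)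
    (hMCAR : IndepFun (fun ω => (X ω, Y ω)) P μ)
    (L : ℝ) (hL : ∀ j, ∫ ω, X ω j ^ 2 ∂μ = L ^ 2)
    (θ : Fin d → ℝ) :
    ∫ ω, (Y ω - ∑ j, θ j * (P ω j * X ω j)) ^ 2 ∂μ =
      (∫ ω, (Y ω - ∑ j, (ρ * θ j) * X ω j) ^ 2 ∂μ) +
        L ^ 2 * ρ * (1 - ρ) * ∑ j, θ j ^ 2 := by
  have hPj : ∀ j, Measurable fun ω => P ω j := fun j => (measurable_pi_apply j).comp hPm
  have hP2 : ∀ j, MemLp (fun ω => P ω j) 2 μ := fun j =>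
    memLp_of_mem_zero_one (hPj j).aestronglyMeasurable (hP01 · j) 2
  have hmean : ∀ j, ∫ ω, P ω j ∂μ = ρ := fun j =>
    (integral_eq_measureReal_of_mem_zero_one (hPj j) (hP01 · j)).trans (hρ j)
  set Z : Ω → ℝ := fun ω => Y ω - ∑ j, ρ * θ j * X ω j
  have hind : IndepFun (fun ω => (X ω, Z ω)) (fun ω j => P ω j - ρ) μ :=
    hMCAR.comp (φ := fun p => (p.1, p.2 - ∑ j, ρ * θ j * p.1 j)) (ψ := fun q j => q j - ρ)
      (by fun_prop) (by fun_prop)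
  have hZ : MemLp Z 2 μ := hY2.sub (memLp_finsetSum _ fun j _ => (hX2 j).const_mul _)
  have hW_mean : ∀ j, ∫ ω, (P ω j - ρ) ∂μ = 0 := fun j => by
    rw [integral_sub ((hP2 j).integrable one_le_two) (integrable_const ρ), hmean j]
    simp
  have hW_uncorr : Pairwise fun j k => ∫ ω, (P ω j - ρ) * (P ω k - ρ) ∂μ = 0 := fun j k hjk => by
    simpa only [covariance, hmean] using (hiid.indepFun hjk).covariance_eq_zero (hP2 j) (hP2 k)
  simp_rw [sub_sum_mul_mul_eq_add_sum_mul_sub _ (Y _) ρ θ (P _) (X _)]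
  rw [integral_sq_add_indep_noise hind hZ hX2 (fun j => (hP2 j).sub (memLp_const ρ)) hW_mean
    hW_uncorr, Finset.mul_sum]
  congr 1
  refine Finset.sum_congr rfl fun j _ => ?_
  rw [integral_sub_sq_of_mem_zero_one (hPj j).aestronglyMeasurable (hP01 · j) (hmean j), hL j]
  ring

theorem stmt5 {Ω : Type*} {mΩ : MeasurableSpace Ω} (μ : Measure Ω) [IsProbabilityMeasure μ]
    {d : ℕ} (X : Ω → Fin d → ℝ) (Y : Ω → ℝ) (P : Ω → Fin d → ℝ)
    (hXm : Measurable X) (hYm : Measurable Y) (hPm : Measurable P)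
    (hX2 : ∀ j, MemLp (fun ω => X ω j) 2 μ) (hY2 : MemLp Y 2 μ)
    (hP01 : ∀ ω j, P ω j = 0 ∨ P ω j = 1)
    (ρ : ℝ) (hρpos : 0 < ρ) (hρle : ρ ≤ 1)
    (hρ : ∀ j, (μ {ω | P ω j = 1}).toReal = ρ)
    (hiid : iIndepFun (fun j ω => P ω j) μ)
    (hMCAR : IndepFun (fun ω => (X ω, Y ω)) P μ)
    (L : ℝ) (hL : ∀ j, ∫ ω, X ω j ^ 2 ∂μ = L ^ 2)
    (θ : Fin d → ℝ) :
    ∫ ω, (Y ω - ∑ j, θ j * (P ω j * X ω j)) ^ 2 ∂μ =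
      (∫ ω, (Y ω - ∑ j, (ρ * θ j) * X ω j) ^ 2 ∂μ) +
        L ^ 2 * ρ * (1 - ρ) * ∑ j, θ j ^ 2 :=
  stmt5_general (mΩ := mΩ) μ X Y P hPm hX2 hY2 hP01 ρ hρ hiid hMCAR L hL θ
end

section
/- Under the ho-MCAR assumption (P ∼ Bernoulli(ρ)^{⊗d} independent of (X,Y)) with ℓ² ≤ E[X_j²] ≤ L² for all j, the zero-imputation bias B_imp = inf_θ R_imp(θ) − inf_θ R(θ) satisfies B_ridge,λ' ≤ B_imp ≤ B_ridge,λ, where λ' = ℓ²(1−ρ)/ρ, λ = L²(1−ρ)/ρ, and B_ridge,λ = inf_θ { R(θ) + λ‖θ‖₂² } − inf_θ R(θ). -/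
open MeasureTheory ProbabilityTheory Finset

/-!
Centre the mask, `P = ρ + (P - ρ)`. Because the mask is independent of `(X, Y)` and its
coordinates are independent with mean `ρ` and variance `ρ (1 - ρ)`, all cross terms vanish and
`R_imp θ = R (ρ θ) + ρ (1 - ρ) ∑ⱼ θⱼ² E[Xⱼ²]`.
Substituting `θ = η / ρ`, minimising `R_imp` is minimising `R` plus a weighted ridge penalty with
weights `(1 - ρ) / ρ · E[Xⱼ²] ∈ [λ', λ]`, and such infima are monotone in the weights.
-/

section

variable {Ω : Type*} {mΩ : MeasurableSpace Ω} {μ : Measure Ω}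

lemma integral_sub_sq_of_memLp {f g : Ω → ℝ} (hf : MemLp f 2 μ) (hg : MemLp g 2 μ) :
    ∫ ω, (f ω - g ω) ^ 2 ∂μ
      = ∫ ω, f ω ^ 2 ∂μ - 2 * ∫ ω, f ω * g ω ∂μ + ∫ ω, g ω ^ 2 ∂μ := by
  have hfg : Integrable (fun ω => 2 * (f ω * g ω)) μ := (hf.integrable_mul hg).const_mul 2
  simp_rw [sub_sq, mul_assoc]
  rw [integral_add _ hg.integrable_sq, integral_sub hf.integrable_sq hfg, integral_const_mul]
  exact hf.integrable_sq.sub hfg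

lemma integral_sq_sub_sum {ι : Type*} [Fintype ι] {A : Ω → ℝ} {Z : ι → Ω → ℝ}
    (hA : MemLp A 2 μ) (hZ : ∀ j, MemLp (Z j) 2 μ) (θ : ι → ℝ) :
    ∫ ω, (A ω - ∑ j, θ j * Z j ω) ^ 2 ∂μ
      = ∫ ω, A ω ^ 2 ∂μ - 2 * ∑ j, θ j * ∫ ω, A ω * Z j ω ∂μ
        + ∑ i, ∑ j, θ i * θ j * ∫ ω, Z i ω * Z j ω ∂μ := by
  have hAZ : ∀ j, Integrable (fun ω => θ j * (A ω * Z j ω)) μ := fun j =>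
    (hA.integrable_mul (hZ j)).const_mul _
  have hZZ : ∀ i j, Integrable (fun ω => θ i * θ j * (Z i ω * Z j ω)) μ := fun i j =>
    ((hZ i).integrable_mul (hZ j)).const_mul _
  have hcross : ∫ ω, A ω * ∑ j, θ j * Z j ω ∂μ = ∑ j, θ j * ∫ ω, A ω * Z j ω ∂μ := by
    simp_rw [mul_sum, mul_left_comm (A _)]
    rw [integral_finsetSum _ fun j _ => hAZ j]
    simp_rw [integral_const_mul]
  have hsquare : ∫ ω, (∑ j, θ j * Z j ω) ^ 2 ∂μ
      = ∑ i, ∑ j, θ i * θ j * ∫ ω, Z i ω * Z j ω ∂μ := by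
    have hpoint : ∀ ω, (∑ j, θ j * Z j ω) ^ 2 = ∑ i, ∑ j, θ i * θ j * (Z i ω * Z j ω) := fun ω => by
      rw [sq, sum_mul_sum]
      exact sum_congr rfl fun i _ => sum_congr rfl fun j _ => by ring
    simp_rw [hpoint]
    rw [integral_finsetSum _ fun i _ => integrable_finsetSum _ fun j _ => hZZ i j]
    simp_rw [integral_finsetSum _ fun j _ => hZZ _ j, integral_const_mul]
  rw [integral_sub_sq_of_memLp hA (memLp_finsetSum _ fun j _ => (hZ j).const_mul _),
    hcross, hsquare]

section Bernoulli

variable {Q : Ω → ℝ} {ρ : ℝ}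

lemma integral_eq_measureReal_of_zero_or_one_s6 (hQm : Measurable Q)
    (hQ : ∀ ω, Q ω = 0 ∨ Q ω = 1) : ∫ ω, Q ω ∂μ = μ.real {ω | Q ω = 1} := by
  have hind : Q = {ω | Q ω = 1}.indicator 1 := by
    ext ω
    rcases hQ ω with h | h <;> simp [h]
  conv_lhs => rw [hind]
  exact integral_indicator_one (hQm (measurableSet_singleton 1))

variable [IsProbabilityMeasure μ]

lemma integrable_of_zero_or_one (hQm : Measurable Q) (hQ : ∀ ω, Q ω = 0 ∨ Q ω = 1) :
    Integrable Q μ :=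
  .of_bound hQm.aestronglyMeasurable 1 <| .of_forall fun ω => by rcases hQ ω with h | h <;> simp [h]

lemma integral_sub_eq_zero_of_zero_or_one (hQm : Measurable Q) (hQ : ∀ ω, Q ω = 0 ∨ Q ω = 1)
    (hρ : μ.real {ω | Q ω = 1} = ρ) : ∫ ω, (Q ω - ρ) ∂μ = 0 := by
  rw [integral_sub (integrable_of_zero_or_one hQm hQ) (integrable_const ρ),
    integral_eq_measureReal_of_zero_or_one_s6 hQm hQ, hρ, integral_const, probReal_univ, one_smul,
    sub_self]

lemma integral_sub_sq_of_zero_or_one (hQm : Measurable Q) (hQ : ∀ ω, Q ω = 0 ∨ Q ω = 1)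
    (hρ : μ.real {ω | Q ω = 1} = ρ) : ∫ ω, (Q ω - ρ) ^ 2 ∂μ = ρ * (1 - ρ) := by
  have hpoint : ∀ ω, (Q ω - ρ) ^ 2 = (1 - 2 * ρ) * Q ω + ρ ^ 2 := fun ω => by
    rcases hQ ω with h | h <;> rw [h] <;> ring
  simp_rw [hpoint]
  rw [integral_add ((integrable_of_zero_or_one hQm hQ).const_mul _) (integrable_const _),
    integral_const_mul, integral_eq_measureReal_of_zero_or_one_s6 hQm hQ, hρ, integral_const,
    probReal_univ, one_smul]
  ring

end Bernoulli

section MaskedRegression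

variable {ι : Type*} {X : Ω → ι → ℝ} {Y : Ω → ℝ} {P : Ω → ι → ℝ} {ρ : ℝ}

lemma memLp_centered_mul (hPm : Measurable P) (hP01 : ∀ ω j, P ω j = 0 ∨ P ω j = 1)
    (hX2 : ∀ j, MemLp (fun ω => X ω j) 2 μ) (j : ι) :
    MemLp (fun ω => (P ω j - ρ) * X ω j) 2 μ := by
  refine (hX2 j).of_le_mul (c := 1 + ‖ρ‖) ?_ (.of_forall fun ω => ?_)
  · exact (hPm.eval.sub_const ρ).aestronglyMeasurable.mul (hX2 j).1
  · rw [norm_mul]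
    gcongr
    calc ‖P ω j - ρ‖ ≤ ‖P ω j‖ + ‖ρ‖ := norm_sub_le _ _
      _ ≤ 1 + ‖ρ‖ := by gcongr; rcases hP01 ω j with h | h <;> simp [h]

variable [IsProbabilityMeasure μ] [DecidableEq ι]

lemma integral_centered_mul_centered (hPm : Measurable P) (hP01 : ∀ ω j, P ω j = 0 ∨ P ω j = 1)
    (hρ : ∀ j, μ.real {ω | P ω j = 1} = ρ) (hiid : iIndepFun (fun j ω => P ω j) μ) (i j : ι) :
    ∫ ω, (P ω i - ρ) * (P ω j - ρ) ∂μ = if i = j then ρ * (1 - ρ) else 0 := by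
  split_ifs with hij
  · subst hij
    simp_rw [← sq]
    exact integral_sub_sq_of_zero_or_one hPm.eval (fun ω => hP01 ω i) (hρ i)
  · rw [(hiid.indepFun hij).integral_fun_comp_mul_comp (f := fun x => x - ρ) (g := fun x => x - ρ)
      hPm.eval.aemeasurable hPm.eval.aemeasurable (measurable_id.sub_const ρ).aestronglyMeasurable
      (measurable_id.sub_const ρ).aestronglyMeasurable,
      integral_sub_eq_zero_of_zero_or_one hPm.eval (fun ω => hP01 ω i) (hρ i), zero_mul]

variable [Fintype ι]

lemma integral_sq_residual_masked_eq (hX2 : ∀ j, MemLp (fun ω => X ω j) 2 μ) (hY2 : MemLp Y 2 μ)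
    (hPm : Measurable P) (hP01 : ∀ ω j, P ω j = 0 ∨ P ω j = 1)
    (hρ : ∀ j, μ.real {ω | P ω j = 1} = ρ) (hiid : iIndepFun (fun j ω => P ω j) μ)
    (hMCAR : IndepFun (fun ω => (X ω, Y ω)) P μ) (θ : ι → ℝ) :
    ∫ ω, (Y ω - ∑ j, θ j * (P ω j * X ω j)) ^ 2 ∂μ
      = ∫ ω, (Y ω - ∑ j, ρ * θ j * X ω j) ^ 2 ∂μ
        + ρ * (1 - ρ) * ∑ j, θ j ^ 2 * ∫ ω, X ω j ^ 2 ∂μ := by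
  set A : Ω → ℝ := fun ω => Y ω - ∑ j, ρ * θ j * X ω j with hA_def
  set Z : ι → Ω → ℝ := fun j ω => (P ω j - ρ) * X ω j with hZ_def
  have hA : MemLp A 2 μ := hY2.sub (memLp_finsetSum _ fun j _ => (hX2 j).const_mul _)
  have hXY : AEMeasurable (fun ω => (X ω, Y ω)) μ :=
    (aemeasurable_pi_lambda _ fun j => (hX2 j).1.aemeasurable).prodMk hY2.1.aemeasurable
  have hsplit : ∀ {f : (ι → ℝ) × ℝ → ℝ} {g : (ι → ℝ) → ℝ}, Measurable f → Measurable g →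
      ∫ ω, f (X ω, Y ω) * g (P ω) ∂μ = (∫ ω, f (X ω, Y ω) ∂μ) * ∫ ω, g (P ω) ∂μ := fun hf hg =>
    hMCAR.integral_fun_comp_mul_comp hXY hPm.aemeasurable hf.aestronglyMeasurable
      hg.aestronglyMeasurable
  have hdecomp : ∀ ω, Y ω - ∑ j, θ j * (P ω j * X ω j) = A ω - ∑ j, θ j * Z j ω := fun ω => by
    simp only [hA_def, hZ_def, sub_sub, ← sum_add_distrib]
    exact congrArg _ (sum_congr rfl fun j _ => by ring)
  have hcross : ∀ j, ∫ ω, A ω * Z j ω ∂μ = 0 := fun j => calc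
    ∫ ω, A ω * Z j ω ∂μ = ∫ ω, (A ω * X ω j) * (P ω j - ρ) ∂μ := by
      congr 1 with ω
      simp only [hZ_def]
      ring
    _ = (∫ ω, A ω * X ω j ∂μ) * ∫ ω, (P ω j - ρ) ∂μ :=
      hsplit (f := fun z => (z.2 - ∑ k, ρ * θ k * z.1 k) * z.1 j) (g := fun p => p j - ρ)
        (by fun_prop) (by fun_prop)
    _ = 0 := by
      rw [integral_sub_eq_zero_of_zero_or_one hPm.eval (fun ω => hP01 ω j) (hρ j), mul_zero]
  have hcov : ∀ i j, ∫ ω, Z i ω * Z j ω ∂μ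
      = if i = j then ρ * (1 - ρ) * ∫ ω, X ω i ^ 2 ∂μ else 0 := fun i j => calc
    ∫ ω, Z i ω * Z j ω ∂μ = ∫ ω, (X ω i * X ω j) * ((P ω i - ρ) * (P ω j - ρ)) ∂μ := by
      congr 1 with ω
      simp only [hZ_def]
      ring
    _ = (∫ ω, X ω i * X ω j ∂μ) * ∫ ω, (P ω i - ρ) * (P ω j - ρ) ∂μ :=
      hsplit (f := fun z => z.1 i * z.1 j) (g := fun p => (p i - ρ) * (p j - ρ))
        (by fun_prop) (by fun_prop)
    _ = _ := by
      rw [integral_centered_mul_centered hPm hP01 hρ hiid]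
      split_ifs with hij
      · subst hij
        simp_rw [← sq]
        ring
      · rw [mul_zero]
  rw [integral_congr_ae (.of_forall fun ω => congrArg (· ^ 2) (hdecomp ω)),
    integral_sq_sub_sum (Z := Z) hA (memLp_centered_mul hPm hP01 hX2) θ]
  simp only [hcross, hcov, mul_zero, sum_const_zero, mul_ite, sum_ite_eq, mem_univ, if_true]
  rw [sub_zero, mul_sum]
  exact congrArg _ (sum_congr rfl fun j _ => by ring)

end MaskedRegression

end

lemma ciInf_add_weighted_sq_mono {ι : Type*} [Fintype ι] {R : (ι → ℝ) → ℝ} (hR : ∀ θ, 0 ≤ R θ)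
    {w w' : ι → ℝ} (hw : ∀ j, 0 ≤ w j) (hww' : ∀ j, w j ≤ w' j) :
    ⨅ θ, (R θ + ∑ j, w j * θ j ^ 2) ≤ ⨅ θ, (R θ + ∑ j, w' j * θ j ^ 2) := by
  refine ciInf_mono ⟨0, ?_⟩ fun θ => ?_
  · rintro _ ⟨θ, rfl⟩
    exact add_nonneg (hR θ) (sum_nonneg fun j _ => mul_nonneg (hw j) (sq_nonneg _))
  · gcongr with j
    exact hww' j

theorem stmt6_general {Ω : Type*} {mΩ : MeasurableSpace Ω} (μ : Measure Ω) [IsProbabilityMeasure μ]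
    {d : ℕ} (X : Ω → Fin d → ℝ) (Y : Ω → ℝ) (P : Ω → Fin d → ℝ)
    (hPm : Measurable P)
    (hX2 : ∀ j, MemLp (fun ω => X ω j) 2 μ) (hY2 : MemLp Y 2 μ)
    (hP01 : ∀ ω j, P ω j = 0 ∨ P ω j = 1)
    (ρ : ℝ) (hρpos : 0 < ρ) (hρlt : ρ < 1)
    (hρ : ∀ j, (μ {ω | P ω j = 1}).toReal = ρ)
    (hiid : iIndepFun (fun j ω => P ω j) μ)
    (hMCAR : IndepFun (fun ω => (X ω, Y ω)) P μ)
    (l L : ℝ)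
    (hmom : ∀ j, l ^ 2 ≤ ∫ ω, X ω j ^ 2 ∂μ ∧ ∫ ω, X ω j ^ 2 ∂μ ≤ L ^ 2)
    (R Rimp : (Fin d → ℝ) → ℝ)
    (hR : ∀ θ, R θ = ∫ ω, (Y ω - ∑ j, θ j * X ω j) ^ 2 ∂μ)
    (hRimp : ∀ θ, Rimp θ = ∫ ω, (Y ω - ∑ j, θ j * (P ω j * X ω j)) ^ 2 ∂μ) :
    (⨅ θ : Fin d → ℝ, (R θ + (l ^ 2 * (1 - ρ) / ρ) * ∑ j, θ j ^ 2)) - (⨅ θ : Fin d → ℝ, R θ) ≤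
        (⨅ θ : Fin d → ℝ, Rimp θ) - (⨅ θ : Fin d → ℝ, R θ) ∧
      (⨅ θ : Fin d → ℝ, Rimp θ) - (⨅ θ : Fin d → ℝ, R θ) ≤
        (⨅ θ : Fin d → ℝ, (R θ + (L ^ 2 * (1 - ρ) / ρ) * ∑ j, θ j ^ 2)) -
          (⨅ θ : Fin d → ℝ, R θ) := by
  have hrescaled : ∀ η : Fin d → ℝ,
      Rimp (ρ⁻¹ • η) = R η + ∑ j, ((∫ ω, X ω j ^ 2 ∂μ) * (1 - ρ) / ρ) * η j ^ 2 := fun η => by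
    rw [hRimp, hR, integral_sq_residual_masked_eq hX2 hY2 hPm hP01 hρ hiid hMCAR, mul_sum]
    simp only [Pi.smul_apply, smul_eq_mul, ← mul_assoc, mul_inv_cancel₀ hρpos.ne', one_mul]
    congr 1
    refine sum_congr rfl fun j _ => ?_
    field_simp
  have hinf : ⨅ θ, Rimp θ = ⨅ η, (R η + ∑ j, ((∫ ω, X ω j ^ 2 ∂μ) * (1 - ρ) / ρ) * η j ^ 2) :=
    (Function.Surjective.iInf_congr (ρ⁻¹ • ·) (fun θ => ⟨ρ • θ, inv_smul_smul₀ hρpos.ne' θ⟩)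
      hrescaled).symm
  have hR0 : ∀ θ, 0 ≤ R θ := fun θ => (hR θ).symm ▸ integral_nonneg fun _ => sq_nonneg _
  have h1ρ : 0 ≤ 1 - ρ := by linarith
  simp only [mul_sum, hinf]
  constructor
  · refine sub_le_sub_right (ciInf_add_weighted_sq_mono hR0 (fun j => by positivity) fun j => ?_) _
    gcongr
    exact (hmom j).1
  · refine sub_le_sub_right (ciInf_add_weighted_sq_mono hR0 (fun j => by positivity) fun j => ?_) _
    gcongr
    exact (hmom j).2

theorem stmt6 {Ω : Type*} {mΩ : MeasurableSpace Ω} (μ : Measure Ω) [IsProbabilityMeasure μ]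
    {d : ℕ} (X : Ω → Fin d → ℝ) (Y : Ω → ℝ) (P : Ω → Fin d → ℝ)
    (hXm : Measurable X) (hYm : Measurable Y) (hPm : Measurable P)
    (hX2 : ∀ j, MemLp (fun ω => X ω j) 2 μ) (hY2 : MemLp Y 2 μ)
    (hP01 : ∀ ω j, P ω j = 0 ∨ P ω j = 1)
    (ρ : ℝ) (hρpos : 0 < ρ) (hρlt : ρ < 1)
    (hρ : ∀ j, (μ {ω | P ω j = 1}).toReal = ρ)
    (hiid : iIndepFun (fun j ω => P ω j) μ)
    (hMCAR : IndepFun (fun ω => (X ω, Y ω)) P μ)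
    (l L : ℝ)
    (hmom : ∀ j, l ^ 2 ≤ ∫ ω, X ω j ^ 2 ∂μ ∧ ∫ ω, X ω j ^ 2 ∂μ ≤ L ^ 2)
    (R Rimp : (Fin d → ℝ) → ℝ)
    (hR : ∀ θ, R θ = ∫ ω, (Y ω - ∑ j, θ j * X ω j) ^ 2 ∂μ)
    (hRimp : ∀ θ, Rimp θ = ∫ ω, (Y ω - ∑ j, θ j * (P ω j * X ω j)) ^ 2 ∂μ) :
    (⨅ θ : Fin d → ℝ, (R θ + (l ^ 2 * (1 - ρ) / ρ) * ∑ j, θ j ^ 2)) - (⨅ θ : Fin d → ℝ, R θ) ≤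
        (⨅ θ : Fin d → ℝ, Rimp θ) - (⨅ θ : Fin d → ℝ, R θ) ∧
      (⨅ θ : Fin d → ℝ, Rimp θ) - (⨅ θ : Fin d → ℝ, R θ) ≤
        (⨅ θ : Fin d → ℝ, (R θ + (L ^ 2 * (1 - ρ) / ρ) * ∑ j, θ j ^ 2)) -
          (⨅ θ : Fin d → ℝ, R θ) :=
  stmt6_general (mΩ := mΩ) μ X Y P hPm hX2 hY2 hP01 ρ hρpos hρlt hρ hiid hMCAR l L hmom R Rimp hR
    hRimp
end

section
/- Suppose X ∈ ℝ^d satisfies X_j = X_1 for all j, E[X_1²] = 1, Y = X_1, and P ∼ Bernoulli(1/2)^{⊗d} independent of X. Then for θ₂ = (2/d, …, 2/d)ᵀ, the imputed risk satisfies E[(Y − θ₂ᵀ(P⊙X))²] = 1/d; in particular the zero-imputation bias over linear predictors is at most 1/d. -/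
/-! The residual factors as `X₁ (1 - (2/d) S)` with `S = ∑ⱼ Pⱼ ~ Bin(d, 1/2)`, and the two factors
are independent. Since `E[(2/d) S] = 1`, the second factor has second moment
`Var[(2/d) S] = (4/d²) · d/4 = 1/d`, while the first has second moment `E[X₁²] = 1`. -/

open MeasureTheory ProbabilityTheory

section ZeroOneValued

variable {Ω : Type*} {mΩ : MeasurableSpace Ω} {μ : Measure Ω} {f : Ω → ℝ}

lemma memLp_of_forall_eq_zero_or_eq_one [IsFiniteMeasure μ] (hf : Measurable f)
    (h01 : ∀ ω, f ω = 0 ∨ f ω = 1) (p : ENNReal) : MemLp f p μ :=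
  MemLp.of_bound hf.aestronglyMeasurable 1 <| ae_of_all _ fun ω => by
    rcases h01 ω with h | h <;> simp [h]

lemma integral_eq_measureReal_of_forall_eq_zero_or_eq_one (hf : Measurable f)
    (h01 : ∀ ω, f ω = 0 ∨ f ω = 1) : ∫ ω, f ω ∂μ = μ.real {ω | f ω = 1} := by
  have hf_eq : f = {ω | f ω = 1}.indicator 1 := by
    ext ω
    rcases h01 ω with h | h <;> simp [h]
  conv_lhs => rw [hf_eq]
  exact integral_indicator_one (hf (measurableSet_singleton 1))

lemma variance_of_forall_eq_zero_or_eq_one [IsProbabilityMeasure μ] (hf : Measurable f)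
    (h01 : ∀ ω, f ω = 0 ∨ f ω = 1) :
    Var[f; μ] = μ.real {ω | f ω = 1} * (1 - μ.real {ω | f ω = 1}) := by
  have hsq : f ^ 2 = f := by
    ext ω
    rcases h01 ω with h | h <;> simp [h]
  rw [variance_eq_sub (memLp_of_forall_eq_zero_or_eq_one hf h01 2), hsq,
    integral_eq_measureReal_of_forall_eq_zero_or_eq_one hf h01]
  ring

end ZeroOneValued

lemma integral_sub_sq_eq_variance {Ω : Type*} {mΩ : MeasurableSpace Ω} {μ : Measure Ω}
    {g : Ω → ℝ} (hg : AEMeasurable g μ) {c : ℝ} (hc : μ[g] = c) :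
    ∫ ω, (c - g ω) ^ 2 ∂μ = Var[g; μ] := by
  simp_rw [variance_eq_integral hg, hc, ← neg_sub (g _), neg_sq]

lemma integral_one_sub_mul_sum_sq {Ω : Type*} {mΩ : MeasurableSpace Ω} {μ : Measure Ω}
    [IsProbabilityMeasure μ] {ι : Type*} [Fintype ι] {P : ι → Ω → ℝ}
    (hP : ∀ i, Measurable (P i)) (h01 : ∀ i ω, P i ω = 0 ∨ P i ω = 1)
    {p : ℝ} (hp : ∀ i, μ.real {ω | P i ω = 1} = p) (hind : Pairwise fun i j => P i ⟂ᵢ[μ] P j)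
    {c : ℝ} (hc : c * (Fintype.card ι * p) = 1) :
    ∫ ω, (1 - c * ∑ i, P i ω) ^ 2 ∂μ = c * (1 - p) := by
  have hL2 : ∀ i, MemLp (P i) 2 μ := fun i => memLp_of_forall_eq_zero_or_eq_one (hP i) (h01 i) 2
  have hmean : μ[fun ω => c * ∑ i, P i ω] = 1 := by
    rw [integral_const_mul, integral_finsetSum _ fun i _ => (hL2 i).integrable one_le_two]
    simp_rw [integral_eq_measureReal_of_forall_eq_zero_or_eq_one (hP _) (h01 _), hp]
    simpa using hc
  have hvar : Var[fun ω => ∑ i, P i ω; μ] = Fintype.card ι * (p * (1 - p)) := by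
    have hsum := IndepFun.variance_sum (s := Finset.univ) (fun i _ => hL2 i)
      fun i _ j _ hij => hind hij
    simp_rw [Finset.sum_fn] at hsum
    simp [hsum, variance_of_forall_eq_zero_or_eq_one (hP _) (h01 _), hp]
  rw [integral_sub_sq_eq_variance (by fun_prop) hmean, variance_const_mul, hvar]
  linear_combination (c * (1 - p)) * hc

theorem stmt8_general {Ω : Type*} {mΩ : MeasurableSpace Ω} (μ : Measure Ω) [IsProbabilityMeasure μ]
    {d : ℕ} (hd : 0 < d) (X P : Ω → Fin d → ℝ)
    (hXm : Measurable X) (hPm : Measurable P)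
    (hXeq : ∀ ω j, X ω j = X ω ⟨0, hd⟩)
    (hX2 : ∫ ω, (X ω ⟨0, hd⟩) ^ 2 ∂μ = 1)
    (hP01 : ∀ ω j, P ω j = 0 ∨ P ω j = 1)
    (hρ : ∀ j, (μ {ω | P ω j = 1}).toReal = 1 / 2)
    (hiid : iIndepFun (fun j ω => P ω j) μ)
    (hindep : IndepFun X P μ) :
    ∫ ω, (X ω ⟨0, hd⟩ - ∑ j, (2 / d : ℝ) * (P ω j * X ω j)) ^ 2 ∂μ = 1 / d := by
  have hresidual : ∀ ω, (X ω ⟨0, hd⟩ - ∑ j, (2 / d : ℝ) * (P ω j * X ω j)) ^ 2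
      = X ω ⟨0, hd⟩ ^ 2 * (1 - (2 / d : ℝ) * ∑ j, P ω j) ^ 2 := by
    intro ω
    simp_rw [hXeq ω, ← mul_assoc, ← Finset.sum_mul, ← Finset.mul_sum]
    ring
  have hfactor : (fun ω => X ω ⟨0, hd⟩ ^ 2) ⟂ᵢ[μ] fun ω => (1 - (2 / d : ℝ) * ∑ j, P ω j) ^ 2 :=
    hindep.comp (φ := fun x : Fin d → ℝ => x ⟨0, hd⟩ ^ 2)
      (ψ := fun p : Fin d → ℝ => (1 - (2 / d : ℝ) * ∑ j, p j) ^ 2) (by fun_prop) (by fun_prop)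
  have hbinomial : ∫ ω, (1 - (2 / d : ℝ) * ∑ j, P ω j) ^ 2 ∂μ = (2 / d : ℝ) * (1 - 1 / 2) :=
    integral_one_sub_mul_sum_sq (fun j => by fun_prop) (fun j ω => hP01 ω j) hρ
      (fun i j hij => hiid.indepFun hij) (by rw [Fintype.card_fin]; field_simp)
  calc _ = ∫ ω, X ω ⟨0, hd⟩ ^ 2 * (1 - (2 / d : ℝ) * ∑ j, P ω j) ^ 2 ∂μ :=
        integral_congr_ae (ae_of_all _ hresidual)
    _ = (∫ ω, X ω ⟨0, hd⟩ ^ 2 ∂μ) * ∫ ω, (1 - (2 / d : ℝ) * ∑ j, P ω j) ^ 2 ∂μ :=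
        hfactor.integral_fun_mul_eq_mul_integral (by fun_prop) (by fun_prop)
    _ = 1 / d := by rw [hX2, hbinomial]; ring

theorem stmt8 {Ω : Type*} {mΩ : MeasurableSpace Ω} (μ : Measure Ω) [IsProbabilityMeasure μ]
    {d : ℕ} (hd : 0 < d) (X P : Ω → Fin d → ℝ)
    (hXm : Measurable X) (hPm : Measurable P)
    (hXeq : ∀ ω j, X ω j = X ω ⟨0, hd⟩)
    (hX2int : MemLp (fun ω => X ω ⟨0, hd⟩) 2 μ)
    (hX2 : ∫ ω, (X ω ⟨0, hd⟩) ^ 2 ∂μ = 1)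
    (hP01 : ∀ ω j, P ω j = 0 ∨ P ω j = 1)
    (hρ : ∀ j, (μ {ω | P ω j = 1}).toReal = 1 / 2)
    (hiid : iIndepFun (fun j ω => P ω j) μ)
    (hindep : IndepFun X P μ) :
    ∫ ω, (X ω ⟨0, hd⟩ - ∑ j, (2 / d : ℝ) * (P ω j * X ω j)) ^ 2 ∂μ = 1 / d :=
  stmt8_general (mΩ := mΩ) μ hd X P hXm hPm hXeq hX2 hP01 hρ hiid hindep
end

section
/- Let X_a be a random vector in ℝ^d with X_a and Y conditionally independent given X. Then for every θ ∈ ℝ^d, E[(Y − θᵀX_a)²] = E[(Y − θᵀE[X_a|X])²] + θᵀΓθ, where Γ = E[(X_a − E[X_a|X])(X_a − E[X_a|X])ᵀ] is the integrated conditional covariance matrix. -/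
/-!
Write `g = E[X_a | X]`, `B = Y - θᵀg` and `S = θᵀ(X_a - g)`, so that `Y - θᵀX_a = B - S`.
Every coordinate of the residual `X_a - g` is orthogonal in `L²` to `X`-measurable variables
(pull-out property) and, by conditional independence, also to `Y`: fibrewise under the
conditional expectation kernel, `E[X_a Y | X] = E[X_a | X] E[Y | X]`. Hence `B ⟂ S`, and
Pythagoras gives `E[(B - S)²] = E[B²] + E[S²]`, where `E[S²] = θᵀΓθ`.
-/

open MeasureTheory ProbabilityTheory Matrix Finset

section Orthogonality

variable {Ω : Type*} {m mΩ : MeasurableSpace Ω} {μ : Measure Ω}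

lemma integral_sub_sq_eq_add_of_integral_mul_eq_zero {f g : Ω → ℝ}
    (hf : MemLp f 2 μ) (hg : MemLp g 2 μ) (hfg : ∫ ω, f ω * g ω ∂μ = 0) :
    ∫ ω, (f ω - g ω) ^ 2 ∂μ = (∫ ω, f ω ^ 2 ∂μ) + ∫ ω, g ω ^ 2 ∂μ := by
  have hexpand : (fun ω => (f ω - g ω) ^ 2) = fun ω => f ω ^ 2 - 2 * (f ω * g ω) + g ω ^ 2 := by
    ext ω; ring
  have hcross : Integrable (fun ω => 2 * (f ω * g ω)) μ := (hf.integrable_mul hg).const_mul 2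
  have hfirst : Integrable (fun ω => f ω ^ 2 - 2 * (f ω * g ω)) μ :=
    hf.integrable_sq.sub hcross
  rw [hexpand, integral_add hfirst hg.integrable_sq, integral_sub hf.integrable_sq hcross,
    integral_const_mul, hfg, mul_zero, sub_zero]

lemma integral_sq_sum_mul_eq_dotProduct_mulVec {ι : Type*} [Fintype ι]
    {e : ι → Ω → ℝ} (he : ∀ i, MemLp (e i) 2 μ) (θ : ι → ℝ) :
    ∫ ω, (∑ i, θ i * e i ω) ^ 2 ∂μ =
      θ ⬝ᵥ (Matrix.of fun i j => ∫ ω, e i ω * e j ω ∂μ) *ᵥ θ := by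
  have hint : ∀ i j, Integrable (fun ω => θ i * θ j * (e i ω * e j ω)) μ :=
    fun i j => ((he i).integrable_mul (he j)).const_mul _
  have hexpand : (fun ω => (∑ i, θ i * e i ω) ^ 2) =
      fun ω => ∑ i, ∑ j, θ i * θ j * (e i ω * e j ω) := by
    ext ω
    rw [sq, sum_mul_sum]
    exact sum_congr rfl fun i _ => sum_congr rfl fun j _ => by ring
  rw [hexpand, integral_finsetSum _ fun i _ => integrable_finsetSum _ fun j _ => hint i j]
  simp only [dotProduct, mulVec, of_apply, mul_sum]
  refine sum_congr rfl fun i _ => ?_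
  rw [integral_finsetSum _ fun j _ => hint i j]
  exact sum_congr rfl fun j _ => by rw [integral_const_mul]; ring

lemma integral_mul_sum_mul_eq_zero {ι : Type*} [Fintype ι] {b : Ω → ℝ} {e : ι → Ω → ℝ}
    (hint : ∀ i, Integrable (fun ω => b ω * e i ω) μ) (horth : ∀ i, ∫ ω, b ω * e i ω ∂μ = 0)
    (θ : ι → ℝ) :
    ∫ ω, b ω * ∑ i, θ i * e i ω ∂μ = 0 := by
  simp_rw [mul_sum, mul_left_comm _ (θ _)]
  rw [integral_finsetSum _ fun i _ => (hint i).const_mul (θ i)]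
  exact sum_eq_zero fun i _ => by rw [integral_const_mul, horth i, mul_zero]

lemma integral_mul_condExp_of_stronglyMeasurable_left (hm : m ≤ mΩ) [SigmaFinite (μ.trim hm)]
    {f h : Ω → ℝ} (hh : StronglyMeasurable[m] h) (hf : Integrable f μ)
    (hhf : Integrable (fun ω => h ω * f ω) μ) :
    ∫ ω, h ω * f ω ∂μ = ∫ ω, h ω * (μ[f|m]) ω ∂μ := by
  rw [← integral_condExp hm]
  exact integral_congr_ae (condExp_mul_of_stronglyMeasurable_left hh hhf hf)

end Orthogonality

section ConditionalIndependence

variable {α Ω : Type*} {mα : MeasurableSpace α} {m mΩ : MeasurableSpace Ω}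

lemma comap_eq_generateFrom_preimage_Iic_rat (f : Ω → ℝ) :
    MeasurableSpace.comap f inferInstance =
      .generateFrom (Set.preimage f '' ⋃ q : ℚ, {Set.Iic (q : ℝ)}) := by
  rw [BorelSpace.measurable_eq (α := ℝ), Real.borel_eq_generateFrom_Iic_rat,
    MeasurableSpace.comap_generateFrom]

/-- The rays `Iic q`, `q : ℚ`, form a countable generating π-system, so the product rule
needs to hold on only countably many pairs of sets. -/
lemma ProbabilityTheory.Kernel.IndepFun.ae_indepFun {κ : Kernel α Ω} [IsMarkovKernel κ]
    {μ : Measure α} {f g : Ω → ℝ} (hf : Measurable f) (hg : Measurable g)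
    (h : Kernel.IndepFun f g κ μ) : ∀ᵐ a ∂μ, ProbabilityTheory.IndepFun f g (κ a) := by
  have hrays : ∀ᵐ a ∂μ, ∀ q r : ℚ, κ a (f ⁻¹' Set.Iic (q : ℝ) ∩ g ⁻¹' Set.Iic (r : ℝ)) =
      κ a (f ⁻¹' Set.Iic (q : ℝ)) * κ a (g ⁻¹' Set.Iic (r : ℝ)) := by
    simp only [ae_all_iff]
    exact fun q r => h _ _ ⟨_, measurableSet_Iic, rfl⟩ ⟨_, measurableSet_Iic, rfl⟩
  filter_upwards [hrays] with a ha
  refine IndepSets.indep hf.comap_le hg.comap_le (Real.isPiSystem_Iic_rat.comap f)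
    (Real.isPiSystem_Iic_rat.comap g) (comap_eq_generateFrom_preimage_Iic_rat f)
    (comap_eq_generateFrom_preimage_Iic_rat g) ?_
  rintro _ _ ⟨_, hs, rfl⟩ ⟨_, ht, rfl⟩
  simp only [Set.mem_iUnion, Set.mem_singleton_iff] at hs ht
  obtain ⟨q, rfl⟩ := hs
  obtain ⟨r, rfl⟩ := ht
  simpa using ha q r

variable [StandardBorelSpace Ω] {hm : m ≤ mΩ} {μ : Measure Ω}
  [IsFiniteMeasure μ] {f g : Ω → ℝ}

lemma ProbabilityTheory.CondIndepFun.integral_mul_eq_integral_condExp_mul_condExp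
    (h : CondIndepFun m hm f g μ) (hf : Measurable f) (hg : Measurable g)
    (hfi : Integrable f μ) (hgi : Integrable g μ) (hfg : Integrable (fun ω => f ω * g ω) μ) :
    ∫ ω, f ω * g ω ∂μ = ∫ ω, (μ[f|m]) ω * (μ[g|m]) ω ∂μ := by
  rw [← integral_condExp hm]
  refine integral_congr_ae ?_
  filter_upwards [condExp_ae_eq_integral_condExpKernel hm hfg,
    condExp_ae_eq_integral_condExpKernel hm hfi, condExp_ae_eq_integral_condExpKernel hm hgi,
    ae_of_ae_trim hm (Kernel.IndepFun.ae_indepFun hf hg h)] with ω hfg_eq hf_eq hg_eq hindep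
  rw [hfg_eq, hf_eq, hg_eq]
  exact hindep.integral_mul_eq_mul_integral hf.aestronglyMeasurable hg.aestronglyMeasurable

lemma ProbabilityTheory.CondIndepFun.integral_sub_mul_sub_condExp_eq_zero
    (hci : CondIndepFun m hm f g μ) (hf : Measurable f) (hg : Measurable g)
    (hf2 : MemLp f 2 μ) (hg2 : MemLp g 2 μ) {h : Ω → ℝ} (hh : StronglyMeasurable[m] h)
    (hh2 : MemLp h 2 μ) :
    ∫ ω, (g ω - h ω) * (f ω - (μ[f|m]) ω) ∂μ = 0 := by
  have hfi := hf2.integrable one_le_two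
  have hgi := hg2.integrable one_le_two
  have hcf2 : MemLp (μ[f|m]) 2 μ := hf2.condExp one_le_two
  have hfg : Integrable (fun ω => f ω * g ω) μ := hf2.integrable_mul hg2
  have hcfg : Integrable (fun ω => (μ[f|m]) ω * g ω) μ := hcf2.integrable_mul hg2
  have hhf : Integrable (fun ω => h ω * f ω) μ := hh2.integrable_mul hf2
  have hhcf : Integrable (fun ω => h ω * (μ[f|m]) ω) μ := hh2.integrable_mul hcf2
  have hexpand : (fun ω => (g ω - h ω) * (f ω - (μ[f|m]) ω)) =
      fun ω => (f ω * g ω - (μ[f|m]) ω * g ω) - (h ω * f ω - h ω * (μ[f|m]) ω) := by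
    ext ω; ring
  rw [hexpand, integral_sub, integral_sub hfg hcfg, integral_sub hhf hhcf,
    hci.integral_mul_eq_integral_condExp_mul_condExp hf hg hfi hgi hfg,
    integral_mul_condExp_of_stronglyMeasurable_left hm stronglyMeasurable_condExp hgi hcfg,
    integral_mul_condExp_of_stronglyMeasurable_left hm hh hfi hhf, sub_self, sub_self, sub_zero]
  exacts [hfg.sub hcfg, hhf.sub hhcf]

end ConditionalIndependence

theorem stmt9_general {Ω : Type*} {mΩ : MeasurableSpace Ω} [StandardBorelSpace Ω]
    (μ : Measure Ω) [IsProbabilityMeasure μ]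
    {d : ℕ} (Xa : Ω → Fin d → ℝ) (Y : Ω → ℝ)
    (hXam : Measurable Xa) (hYm : Measurable Y)
    (hXa2 : ∀ j, MemLp (fun ω => Xa ω j) 2 μ) (hY2 : MemLp Y 2 μ)
    (mX : MeasurableSpace Ω)
    (hmX : mX ≤ mΩ)
    (hci : CondIndepFun mX hmX Xa Y μ)
    (Γ : Matrix (Fin d) (Fin d) ℝ)
    (hΓ : Γ = Matrix.of fun i j =>
      ∫ ω, (Xa ω i - (μ[fun ω' => Xa ω' i | mX]) ω) *
        (Xa ω j - (μ[fun ω' => Xa ω' j | mX]) ω) ∂μ)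
    (θ : Fin d → ℝ) :
    ∫ ω, (Y ω - ∑ j, θ j * Xa ω j) ^ 2 ∂μ =
      (∫ ω, (Y ω - ∑ j, θ j * (μ[fun ω' => Xa ω' j | mX]) ω) ^ 2 ∂μ) +
        θ ⬝ᵥ Γ.mulVec θ := by
  have hcond2 : ∀ j, MemLp (μ[fun ω' => Xa ω' j | mX]) 2 μ :=
    fun j => (hXa2 j).condExp one_le_two
  have hres2 : ∀ j, MemLp (fun ω => Xa ω j - (μ[fun ω' => Xa ω' j | mX]) ω) 2 μ :=
    fun j => (hXa2 j).sub (hcond2 j)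
  have hfit2 : MemLp (fun ω => ∑ j, θ j * (μ[fun ω' => Xa ω' j | mX]) ω) 2 μ :=
    memLp_finsetSum _ fun j _ => (hcond2 j).const_mul (θ j)
  have hfit : StronglyMeasurable[mX] fun ω => ∑ j, θ j * (μ[fun ω' => Xa ω' j | mX]) ω :=
    stronglyMeasurable_fun_sum _ fun j _ => stronglyMeasurable_condExp.const_mul (θ j)
  have hbias2 : MemLp (fun ω => Y ω - ∑ j, θ j * (μ[fun ω' => Xa ω' j | mX]) ω) 2 μ :=
    hY2.sub hfit2
  have horth : ∀ j, ∫ ω, (Y ω - ∑ i, θ i * (μ[fun ω' => Xa ω' i | mX]) ω) *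
      (Xa ω j - (μ[fun ω' => Xa ω' j | mX]) ω) ∂μ = 0 := fun j =>
    CondIndepFun.integral_sub_mul_sub_condExp_eq_zero (f := fun ω => Xa ω j)
      (hci.comp (measurable_pi_apply j) measurable_id) ((measurable_pi_apply j).comp hXam) hYm
      (hXa2 j) hY2 hfit hfit2
  calc ∫ ω, (Y ω - ∑ j, θ j * Xa ω j) ^ 2 ∂μ
      = ∫ ω, ((Y ω - ∑ j, θ j * (μ[fun ω' => Xa ω' j | mX]) ω) -
          ∑ j, θ j * (Xa ω j - (μ[fun ω' => Xa ω' j | mX]) ω)) ^ 2 ∂μ := by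
        simp only [mul_sub, sum_sub_distrib, sub_sub_sub_cancel_right]
    _ = _ := by
        rw [integral_sub_sq_eq_add_of_integral_mul_eq_zero hbias2
          (memLp_finsetSum _ fun j _ => (hres2 j).const_mul (θ j))
          (integral_mul_sum_mul_eq_zero (fun j => hbias2.integrable_mul (hres2 j)) horth θ),
          integral_sq_sum_mul_eq_dotProduct_mulVec hres2, hΓ]

theorem stmt9 {Ω : Type*} {mΩ : MeasurableSpace Ω} [StandardBorelSpace Ω]
    (μ : Measure Ω) [IsProbabilityMeasure μ]
    {d : ℕ} (X Xa : Ω → Fin d → ℝ) (Y : Ω → ℝ)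
    (hXm : Measurable X) (hXam : Measurable Xa) (hYm : Measurable Y)
    (hXa2 : ∀ j, MemLp (fun ω => Xa ω j) 2 μ) (hY2 : MemLp Y 2 μ)
    (mX : MeasurableSpace Ω) (hmXdef : mX = MeasurableSpace.comap X inferInstance)
    (hmX : mX ≤ mΩ)
    (hci : CondIndepFun mX hmX Xa Y μ)
    (Γ : Matrix (Fin d) (Fin d) ℝ)
    (hΓ : Γ = Matrix.of fun i j =>
      ∫ ω, (Xa ω i - (μ[fun ω' => Xa ω' i | mX]) ω) *
        (Xa ω j - (μ[fun ω' => Xa ω' j | mX]) ω) ∂μ)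
    (θ : Fin d → ℝ) :
    ∫ ω, (Y ω - ∑ j, θ j * Xa ω j) ^ 2 ∂μ =
      (∫ ω, (Y ω - ∑ j, θ j * (μ[fun ω' => Xa ω' j | mX]) ω) ^ 2 ∂μ) +
        θ ⬝ᵥ Γ.mulVec θ :=
  stmt9_general μ Xa Y hXam hYm hXa2 hY2 mX hmX hci Γ hΓ θ
end

section
/- If each component P_j of the mask is correlated with at most k−1 other components (i.e., each row of C has at most k nonzero entries), then λ_max(C) ≤ k · max_j (1−ρ_j)/ρ_j, where C_{ij} = Cov(P_i,P_j)/(ρ_i ρ_j) and ρ_j = P(P_j=1) ∈ (0,1]. -/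
open Matrix

theorem stmt14 {d : ℕ} (hd : 0 < d) (k : ℕ)
    (ρ : Fin d → ℝ) (hρ : ∀ j, 0 < ρ j ∧ ρ j ≤ 1)
    (C : Matrix (Fin d) (Fin d) ℝ) (hCh : C.IsHermitian)
    (hdiag : ∀ j, C j j = (1 - ρ j) / ρ j)
    (hoff : ∀ i j, |C i j| ≤ Real.sqrt (C i i * C j j))
    (hsparse : ∀ i, (Finset.univ.filter fun j => C i j ≠ 0).card ≤ k) :
    ∀ i, hCh.eigenvalues i ≤ (k : ℝ) * ⨆ j, (1 - ρ j) / ρ j := by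
  intro i
  haveI : Nonempty (Fin d) := ⟨⟨0, hd⟩⟩
  set M : ℝ := ⨆ j, (1 - ρ j) / ρ j with hM
  have hdiag_nonneg : ∀ j, 0 ≤ C j j := by
    intro j
    rw [hdiag]
    exact div_nonneg (by linarith [(hρ j).2]) (le_of_lt (hρ j).1)
  have hle_M : ∀ j, C j j ≤ M := by
    intro j
    rw [hdiag]
    exact le_ciSup (f := fun j => (1 - ρ j) / ρ j) (Set.Finite.bddAbove (Set.finite_range _)) j
  have hM_nonneg : 0 ≤ M := le_trans (hdiag_nonneg (Classical.arbitrary _))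
    (hle_M (Classical.arbitrary _))
  have habs : ∀ a b, |C a b| ≤ M := by
    intro a b
    refine (hoff a b).trans ?_
    calc Real.sqrt (C a a * C b b) ≤ Real.sqrt (M * M) := by
          apply Real.sqrt_le_sqrt
          exact mul_le_mul (hle_M a) (hle_M b) (hdiag_nonneg b) hM_nonneg
      _ = M := Real.sqrt_mul_self hM_nonneg
  -- the eigenvalue is an eigenvalue of toLin'
  set μ : ℝ := hCh.eigenvalues i with hμdef
  have hev : Module.End.HasEigenvalue (Matrix.toLin' C) μ := by
    have hv := hCh.mulVec_eigenvectorBasis i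
    refine Module.End.hasEigenvalue_of_hasEigenvector (x := ⇑(hCh.eigenvectorBasis i)) ⟨?_, ?_⟩
    · rw [Module.End.mem_eigenspace_iff]
      simpa [Matrix.toLin'_apply] using hv
    · intro h
      have hz : hCh.eigenvectorBasis i = 0 := by
        ext j; exact congrFun h j
      have := (hCh.eigenvectorBasis).orthonormal.1 i
      rw [hz] at this
      simp at this
  obtain ⟨a, ha⟩ := eigenvalue_mem_ball hev
  rw [Metric.mem_closedBall, Real.dist_eq] at ha
  have h1 : μ ≤ C a a + ∑ j ∈ Finset.univ.erase a, ‖C a j‖ := by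
    have := abs_le.mp ha
    linarith [this.2]
  have h2 : C a a + ∑ j ∈ Finset.univ.erase a, ‖C a j‖ = ∑ j, |C a j| := by
    rw [← Finset.add_sum_erase Finset.univ (fun j => |C a j|) (Finset.mem_univ a),
      abs_of_nonneg (hdiag_nonneg a)]
    rfl
  have h3 : ∑ j, |C a j| ≤ (k : ℝ) * M := by
    have hsub : ∑ j, |C a j| = ∑ j ∈ Finset.univ.filter (fun j => C a j ≠ 0), |C a j| := by
      symm
      apply Finset.sum_filter_of_ne
      intro j _ h
      intro hz
      exact h (by simp [hz])
    rw [hsub]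
    calc ∑ j ∈ Finset.univ.filter (fun j => C a j ≠ 0), |C a j|
        ≤ ∑ _j ∈ Finset.univ.filter (fun j => C a j ≠ 0), M :=
          Finset.sum_le_sum fun j _ => habs a j
      _ = ((Finset.univ.filter (fun j => C a j ≠ 0)).card : ℝ) * M := by
          rw [Finset.sum_const, nsmul_eq_mul]
      _ ≤ (k : ℝ) * M := by
          apply mul_le_mul_of_nonneg_right _ hM_nonneg
          exact_mod_cast hsparse a
  linarith [h1, h2 ▸ h1]
end

section
/- Let Σ be symmetric PSD of rank r with eigenpairs (λ_j, v_j), eigenvalues non-increasing, and let θ* ∈ ℝ^d satisfy (v_1ᵀθ*)² ≥ (v_2ᵀθ*)² ≥ … ≥ (v_dᵀθ*)². Then λ ∑_{j=1}^d (λ_j/(λ_j+λ))(v_jᵀθ*)² ≤ λ · (r/Tr(Σ)) · (∑_{k=1}^r 1/k) · ‖θ*‖²_Σ, hence B_ridge,λ ≤ C λ r (log r + 1) ‖θ*‖²_Σ / Tr(Σ) for a universal constant C. -/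
/-!
The weights `λⱼ / (λⱼ + λ)` lie in `[0, 1]` and vanish for `j ≥ r`, so the bias is at most
`λ ∑_{j<r} (vⱼᵀθ)²`. The sequences `(λⱼ)` and `((vⱼᵀθ)²)` are both non-increasing, so Chebyshev's
sum inequality on the first `r` indices gives `Tr(Σ) ∑_{j<r} (vⱼᵀθ)² ≤ r ‖θ‖²_Σ`. This is already
the bound without the harmonic factor `H_r = ∑_{k ≤ r} 1/k`; since `1 ≤ H_r ≤ log r + 1`, both
claimed bounds follow.
-/

open Finset Matrix

section SumInequalities

variable {ι α : Type*} [Fintype ι] [Semiring α] [LinearOrder α] [IsStrictOrderedRing α]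

theorem Monovary.sum_mul_sum_le_card_mul_sum_of_eq_zero_off [ExistsAddOfLE α] {f g : ι → α}
    (hfg : Monovary f g) (s : Finset ι) (hfs : ∀ i ∉ s, f i = 0) :
    (∑ i, f i) * ∑ i ∈ s, g i ≤ #s * ∑ i, f i * g i := by
  have hsum : ∀ h : ι → α, (∀ i ∉ s, h i = 0) → ∑ i ∈ s, h i = ∑ i, h i := fun h hh =>
    sum_subset (subset_univ s) fun i _ hi => hh i hi
  rw [← hsum f hfs, ← hsum (fun i => f i * g i) fun i hi => by simp [hfs i hi]]
  exact (hfg.monovaryOn s).sum_mul_sum_le_card_mul_sum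

theorem sum_mul_le_sum_of_le_one_of_eq_zero_off {w a : ι → α} (s : Finset ι)
    (hw : ∀ i, w i ≤ 1) (hws : ∀ i ∉ s, w i = 0) (ha : ∀ i, 0 ≤ a i) :
    ∑ i, w i * a i ≤ ∑ i ∈ s, a i := by
  rw [← sum_subset (subset_univ s) fun i _ hi => by simp [hws i hi]]
  exact sum_le_sum fun i _ => mul_le_of_le_one_left (ha i) (hw i)

end SumInequalities

theorem sum_range_one_div_eq_harmonic (n : ℕ) :
    ∑ m ∈ range n, (1 : ℝ) / (m + 1) = harmonic n := by
  simp [harmonic, one_div]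

theorem one_le_harmonic {n : ℕ} (hn : 1 ≤ n) : 1 ≤ harmonic n := by
  have := single_le_sum (f := fun i : ℕ => ((i + 1 : ℕ) : ℚ)⁻¹) (fun i _ => by positivity)
    (mem_range.2 hn)
  simpa [harmonic] using this

theorem sum_mul_sum_div_add_mul_le_mul_sum_mul {d r : ℕ} {ev a : Fin d → ℝ}
    (hev : Antitone ev) (ha : Antitone a) (hev_nonneg : ∀ j, 0 ≤ ev j)
    (hzero : ∀ j : Fin d, r ≤ (j : ℕ) → ev j = 0) (ha_nonneg : ∀ j, 0 ≤ a j)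
    {lam : ℝ} (hlam : 0 ≤ lam) :
    (∑ j, ev j) * ∑ j, ev j / (ev j + lam) * a j ≤ r * ∑ j, ev j * a j := by
  set s : Finset (Fin d) := {j | (j : ℕ) < r}
  have hev_off : ∀ j ∉ s, ev j = 0 := fun j hj => hzero j (by simpa [s] using hj)
  have hweights : ∑ j, ev j / (ev j + lam) * a j ≤ ∑ j ∈ s, a j :=
    sum_mul_le_sum_of_le_one_of_eq_zero_off s
      (fun j => div_le_one_of_le₀ (by linarith) (by linarith [hev_nonneg j]))
      (fun j hj => by simp [hev_off j hj]) ha_nonneg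
  calc (∑ j, ev j) * ∑ j, ev j / (ev j + lam) * a j ≤ (∑ j, ev j) * ∑ j ∈ s, a j := by
        gcongr
        exact sum_nonneg fun j _ => hev_nonneg j
    _ ≤ #s * ∑ j, ev j * a j :=
        (hev.monovary ha).sum_mul_sum_le_card_mul_sum_of_eq_zero_off s hev_off
    _ ≤ r * ∑ j, ev j * a j := by
        gcongr
        · exact sum_nonneg fun j _ => mul_nonneg (hev_nonneg j) (ha_nonneg j)
        · exact_mod_cast Fin.card_filter_val_lt.trans_le (min_le_right d r)

theorem stmt16_general {d : ℕ} (r : ℕ) (hr : 1 ≤ r) (hrd : r ≤ d)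
    (Sig : Matrix (Fin d) (Fin d) ℝ)
    (ev : Fin d → ℝ) (v : Fin d → Fin d → ℝ)
    (hdecomp : Sig = ∑ j, ev j • Matrix.vecMulVec (v j) (v j))
    (horth : ∀ i j, v i ⬝ᵥ v j = if i = j then (1 : ℝ) else 0)
    (hmono : ∀ i j : Fin d, i ≤ j → ev j ≤ ev i)
    (hpos : ∀ j : Fin d, (j : ℕ) < r → 0 < ev j)
    (hzero : ∀ j : Fin d, r ≤ (j : ℕ) → ev j = 0)
    (θ : Fin d → ℝ)
    (hθmono : ∀ i j : Fin d, i ≤ j → (v j ⬝ᵥ θ) ^ 2 ≤ (v i ⬝ᵥ θ) ^ 2)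
    (lam : ℝ) (hlam : 0 < lam) :
    lam * ∑ j, (ev j / (ev j + lam)) * (v j ⬝ᵥ θ) ^ 2 ≤
        lam * ((r : ℝ) / Sig.trace) * (∑ m ∈ Finset.range r, (1 : ℝ) / (m + 1)) *
          (∑ j, ev j * (v j ⬝ᵥ θ) ^ 2) ∧
      lam * ∑ j, (ev j / (ev j + lam)) * (v j ⬝ᵥ θ) ^ 2 ≤
        lam * r * (Real.log r + 1) * (∑ j, ev j * (v j ⬝ᵥ θ) ^ 2) / Sig.trace := by
  set a : Fin d → ℝ := fun j => (v j ⬝ᵥ θ) ^ 2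
  set T := ∑ j, ev j
  set S := ∑ j, ev j * a j
  set H := ∑ m ∈ range r, (1 : ℝ) / (m + 1)
  have hev_nonneg : ∀ j, 0 ≤ ev j := fun j =>
    (lt_or_ge (j : ℕ) r).elim (fun h => (hpos j h).le) fun h => (hzero j h).ge
  have htrace : Sig.trace = T := by simp [hdecomp, trace_sum, horth, T]
  have hT_pos : 0 < T :=
    (hpos ⟨0, by omega⟩ hr).trans_le (single_le_sum (fun j _ => hev_nonneg j) (mem_univ _))
  have hbias : ∑ j, ev j / (ev j + lam) * a j ≤ r / T * S := by
    rw [div_mul_eq_mul_div, le_div_iff₀ hT_pos, mul_comm]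
    exact sum_mul_sum_div_add_mul_le_mul_sum_mul hmono hθmono hev_nonneg hzero
      (fun j => sq_nonneg _) hlam.le
  have hH : 1 ≤ H ∧ H ≤ Real.log r + 1 := by
    simp only [H, sum_range_one_div_eq_harmonic]
    exact ⟨mod_cast one_le_harmonic hr, (harmonic_le_one_add_log r).trans_eq (add_comm _ _)⟩
  have hS_nonneg : 0 ≤ S := sum_nonneg fun j _ => mul_nonneg (hev_nonneg j) (sq_nonneg _)
  have hfirst : lam * ∑ j, ev j / (ev j + lam) * a j ≤ lam * (r / T) * H * S :=
    calc lam * ∑ j, ev j / (ev j + lam) * a j ≤ lam * (r / T * S * H) := by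
          gcongr
          exact hbias.trans (le_mul_of_one_le_right (by positivity) hH.1)
      _ = lam * (r / T) * H * S := by ring
  rw [htrace]
  refine ⟨hfirst, hfirst.trans ?_⟩
  calc lam * (r / T) * H * S ≤ lam * (r / T) * (Real.log r + 1) * S := by gcongr; exact hH.2
    _ = lam * r * (Real.log r + 1) * S / T := by ring

theorem stmt16 {d : ℕ} (r : ℕ) (hr : 1 ≤ r) (hrd : r ≤ d)
    (Sig : Matrix (Fin d) (Fin d) ℝ) (hSig : Sig.PosSemidef)
    (ev : Fin d → ℝ) (v : Fin d → Fin d → ℝ)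
    (hdecomp : Sig = ∑ j, ev j • Matrix.vecMulVec (v j) (v j))
    (horth : ∀ i j, v i ⬝ᵥ v j = if i = j then (1 : ℝ) else 0)
    (hmono : ∀ i j : Fin d, i ≤ j → ev j ≤ ev i)
    (hpos : ∀ j : Fin d, (j : ℕ) < r → 0 < ev j)
    (hzero : ∀ j : Fin d, r ≤ (j : ℕ) → ev j = 0)
    (θ : Fin d → ℝ)
    (hθmono : ∀ i j : Fin d, i ≤ j → (v j ⬝ᵥ θ) ^ 2 ≤ (v i ⬝ᵥ θ) ^ 2)
    (lam : ℝ) (hlam : 0 < lam) :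
    lam * ∑ j, (ev j / (ev j + lam)) * (v j ⬝ᵥ θ) ^ 2 ≤
        lam * ((r : ℝ) / Sig.trace) * (∑ m ∈ Finset.range r, (1 : ℝ) / (m + 1)) *
          (∑ j, ev j * (v j ⬝ᵥ θ) ^ 2) ∧
      lam * ∑ j, (ev j / (ev j + lam)) * (v j ⬝ᵥ θ) ^ 2 ≤
        lam * r * (Real.log r + 1) * (∑ j, ev j * (v j ⬝ᵥ θ) ^ 2) / Sig.trace :=
  stmt16_general r hr hrd Sig ev v hdecomp horth hmono hpos hzero θ hθmono lam hlam
end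

section
/- Spiked model: let Σ = Σ_≤ + Σ_> with Σ_≤ symmetric PSD of rank r whose nonzero eigenvalues all equal μ > 0, and Σ_> symmetric PSD with Σ_> ⪯ ηI, and suppose Σ_≤ Σ_> = 0 (orthogonal ranges). Then for every λ > 0 and θ* ∈ ℝ^d: λ (θ*)ᵀΣ(Σ+λI)^{-1}θ* ≤ (λ/μ)‖θ*‖²_Σ + η‖θ*_>‖₂², where θ*_> is the orthogonal projection of θ* onto the range of Σ_>. Moreover μ ≥ (Tr(Σ) − dη)/r. -/
/-!
Write `M = Σ_≤ + Σ_> + λI`. Since `Σ_≤ Σ_> = Σ_> Σ_≤ = 0` and `Σ_≤² = μ Σ_≤`, the two pieces act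
on `M` separately: `Σ_≤ M⁻¹ = (μ + λ)⁻¹ Σ_≤`, and `Σ_>` commutes with `M⁻¹` with
`Σ_> - λ Σ_> M⁻¹ = Σ_> M⁻¹ Σ_> ⪰ 0`. Hence the spike contributes `λ/(μ+λ) ≤ λ/μ` times
`‖θ*‖²_{Σ_≤}`, and the bulk at most `θ*ᵀ Σ_> θ* = θ*_>ᵀ Σ_> θ*_> ≤ η ‖θ*_>‖²`.
The bound on `μ` is `Tr Σ_≤ = rμ` together with `Tr Σ_> ≤ dη`.
-/

open Matrix

namespace Matrix

variable {n : Type*} [Fintype n]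

lemma IsHermitian.mul_self_eq_smul_of_eigenvalues [DecidableEq n] {A : Matrix n n ℝ}
    (hA : A.IsHermitian) {μ : ℝ} (h : ∀ i, hA.eigenvalues i = 0 ∨ hA.eigenvalues i = μ) :
    A * A = μ • A := by
  have hsa : IsSelfAdjoint A := hA
  have hspec : (spectrum ℝ A).EqOn (fun x ↦ x * x) (fun x ↦ μ * x) := by
    rw [hA.spectrum_real_eq_range_eigenvalues]
    rintro _ ⟨i, rfl⟩
    rcases h i with h | h <;> simp [h]
  calc A * A = cfc (fun x ↦ x * x) A := by rw [cfc_mul _ _ A, cfc_id' ℝ A]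
    _ = cfc (fun x ↦ μ * x) A := cfc_congr hspec
    _ = μ • A := by rw [cfc_const_mul _ _ A, cfc_id' ℝ A]

lemma IsHermitian.trace_eq_rank_mul_of_eigenvalues [DecidableEq n] {A : Matrix n n ℝ}
    (hA : A.IsHermitian) {μ : ℝ} (h : ∀ i, hA.eigenvalues i = 0 ∨ hA.eigenvalues i = μ) :
    A.trace = A.rank * μ := by
  have hev : ∀ i, hA.eigenvalues i = if hA.eigenvalues i ≠ 0 then μ else 0 := by
    intro i
    rcases h i with h | h <;> split_ifs <;> simp_all
  rw [hA.trace_eq_sum_eigenvalues, hA.rank_eq_card_non_zero_eigs]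
  simp only [RCLike.ofReal_real_eq_id, id]
  rw [Finset.sum_congr rfl fun i _ ↦ hev i, Finset.sum_ite, Finset.sum_const_zero, add_zero,
    Finset.sum_const, nsmul_eq_mul, Fintype.card_subtype]

lemma trace_le_card_mul_of_posSemidef_smul_one_sub [DecidableEq n] {A : Matrix n n ℝ} {η : ℝ}
    (h : (η • 1 - A).PosSemidef) : A.trace ≤ Fintype.card n * η := by
  have := h.trace_nonneg
  rw [trace_sub, trace_smul, trace_one, smul_eq_mul] at this
  linarith

lemma dotProduct_mulVec_le_of_posSemidef_smul_one_sub [DecidableEq n] {A : Matrix n n ℝ} {η : ℝ}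
    (h : (η • 1 - A).PosSemidef) (x : n → ℝ) : x ⬝ᵥ A *ᵥ x ≤ η * ∑ j, x j ^ 2 := by
  have := h.dotProduct_mulVec_nonneg x
  have hsq : x ⬝ᵥ x = ∑ j, x j ^ 2 := by simp only [dotProduct, sq]
  simp only [star_trivial, sub_mulVec, smul_mulVec, one_mulVec, dotProduct_sub,
    dotProduct_smul, smul_eq_mul, hsq] at this
  linarith

lemma IsHermitian.dotProduct_mulVec_eq_of_sub_orthogonal {A : Matrix n n ℝ} (hA : A.IsHermitian)
    {x y : n → ℝ} (h : ∀ w, (x - y) ⬝ᵥ A *ᵥ w = 0) : x ⬝ᵥ A *ᵥ x = y ⬝ᵥ A *ᵥ y := by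
  have hsymm : y ⬝ᵥ A *ᵥ (x - y) = (x - y) ⬝ᵥ A *ᵥ y := by
    rw [dotProduct_mulVec, ← mulVec_transpose, dotProduct_comm,
      ← conjTranspose_eq_transpose_of_trivial, hA]
  have hx := h x
  have hy := h y
  rw [sub_dotProduct] at hx hy
  simp only [mulVec_sub, dotProduct_sub, sub_dotProduct] at hsymm
  linarith

lemma mul_inv_eq_inv_smul_of_mul_eq_smul [DecidableEq n] {K : Type*} [Field K]
    {A M : Matrix n n K} {c : K} (hM : IsUnit M.det) (hc : c ≠ 0) (h : A * M = c • A) :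
    A * M⁻¹ = c⁻¹ • A := by
  rw [eq_inv_smul_iff₀ hc, ← Matrix.smul_mul, ← h, mul_assoc, mul_nonsing_inv _ hM, mul_one]

lemma smul_dotProduct_mul_inv_mulVec_le [DecidableEq n] {P Q : Matrix n n ℝ} {lam : ℝ}
    (hQ : Q.PosSemidef) (hPQ : P * Q = 0) (hQP : Q * P = 0) (hM : (P + Q + lam • 1).PosDef)
    (x : n → ℝ) : lam * (x ⬝ᵥ (Q * (P + Q + lam • 1)⁻¹) *ᵥ x) ≤ x ⬝ᵥ Q *ᵥ x := by
  set M := P + Q + lam • 1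
  have hdet : IsUnit M.det := M.isUnit_iff_isUnit_det.mp hM.isUnit
  have hcomm : Commute Q M⁻¹ := by
    have : Commute Q M := by
      simp only [Commute, SemiconjBy, M, mul_add, add_mul, hPQ, hQP, Matrix.mul_smul,
        Matrix.smul_mul, mul_one, one_mul]
    exact this.units_inv_right (u := nonsingInvUnit M hdet)
  have hkey : Q - lam • (Q * M⁻¹) = Qᴴ * M⁻¹ * Q := by
    calc Q - lam • (Q * M⁻¹) = (Q * M - lam • Q) * M⁻¹ := by
          rw [Matrix.sub_mul, mul_assoc, mul_nonsing_inv _ hdet, mul_one, Matrix.smul_mul]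
      _ = Q * Q * M⁻¹ := by
          simp only [M, mul_add, hQP, Matrix.mul_smul, mul_one, zero_add, add_sub_cancel_right]
      _ = Qᴴ * M⁻¹ * Q := by rw [hQ.1.eq, mul_assoc, mul_assoc, hcomm.eq]
  have := (hM.inv.posSemidef.conjTranspose_mul_mul_same Q).dotProduct_mulVec_nonneg x
  rw [← hkey, star_trivial, sub_mulVec, dotProduct_sub, smul_mulVec, dotProduct_smul,
    smul_eq_mul] at this
  linarith

lemma smul_dotProduct_mul_inv_mulVec_le_of_spike [DecidableEq n] {P Q : Matrix n n ℝ}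
    (hP : P.PosSemidef) (hQ : Q.PosSemidef) {μ : ℝ} (hμ : 0 < μ)
    (heig : ∀ i, hP.1.eigenvalues i = 0 ∨ hP.1.eigenvalues i = μ) {η : ℝ}
    (hη : (η • 1 - Q).PosSemidef) (hPQ : P * Q = 0) {lam : ℝ} (hlam : 0 < lam) {x y : n → ℝ}
    (hproj : ∀ w, (x - y) ⬝ᵥ Q *ᵥ w = 0) :
    lam * (x ⬝ᵥ ((P + Q) * (P + Q + lam • 1)⁻¹) *ᵥ x) ≤
      lam / μ * (x ⬝ᵥ (P + Q) *ᵥ x) + η * ∑ j, y j ^ 2 := by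
  have hQP : Q * P = 0 := by
    have h := congrArg conjTranspose hPQ
    rwa [conjTranspose_mul, hQ.1.eq, hP.1.eq, conjTranspose_zero] at h
  have hM : (P + Q + lam • 1).PosDef :=
    PosDef.posSemidef_add (hP.add hQ) (PosDef.one.smul hlam)
  have hspike : P * (P + Q + lam • 1)⁻¹ = (μ + lam)⁻¹ • P := by
    refine mul_inv_eq_inv_smul_of_mul_eq_smul (isUnit_iff_isUnit_det _ |>.mp hM.isUnit)
      (by positivity) ?_
    rw [mul_add, mul_add, hP.1.mul_self_eq_smul_of_eigenvalues heig, hPQ, Matrix.mul_smul,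
      mul_one, add_zero, add_smul]
  have hbulk := smul_dotProduct_mul_inv_mulVec_le hQ hPQ hQP hM x
  have hcoef : lam * (μ + lam)⁻¹ ≤ lam / μ :=
    div_le_div_of_nonneg_left hlam.le hμ (by linarith)
  have hxP := hP.dotProduct_mulVec_nonneg x
  have hxQ := hQ.dotProduct_mulVec_nonneg x
  rw [star_trivial] at hxP hxQ
  calc lam * (x ⬝ᵥ ((P + Q) * (P + Q + lam • 1)⁻¹) *ᵥ x)
        = lam * (μ + lam)⁻¹ * (x ⬝ᵥ P *ᵥ x)
          + lam * (x ⬝ᵥ (Q * (P + Q + lam • 1)⁻¹) *ᵥ x) := by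
        rw [Matrix.add_mul, add_mulVec, dotProduct_add, hspike, smul_mulVec, dotProduct_smul,
          smul_eq_mul]
        ring
    _ ≤ lam / μ * (x ⬝ᵥ P *ᵥ x) + y ⬝ᵥ Q *ᵥ y :=
        add_le_add (mul_le_mul_of_nonneg_right hcoef hxP)
          (hbulk.trans_eq (hQ.1.dotProduct_mulVec_eq_of_sub_orthogonal hproj))
    _ ≤ lam / μ * (x ⬝ᵥ P *ᵥ x + x ⬝ᵥ Q *ᵥ x) + η * ∑ j, y j ^ 2 := by
        gcongr
        · linarith
        · exact dotProduct_mulVec_le_of_posSemidef_smul_one_sub hη y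
    _ = lam / μ * (x ⬝ᵥ (P + Q) *ᵥ x) + η * ∑ j, y j ^ 2 := by
        rw [add_mulVec, dotProduct_add]

end Matrix

theorem stmt17_general {d : ℕ} (r : ℕ)
    (Sle Sgt : Matrix (Fin d) (Fin d) ℝ)
    (hle : Sle.PosSemidef) (hgt : Sgt.PosSemidef)
    (hrank : Sle.rank = r)
    (μ0 : ℝ) (hμ0 : 0 < μ0)
    (heig : ∀ i, hle.1.eigenvalues i = 0 ∨ hle.1.eigenvalues i = μ0)
    (η : ℝ) (hη : (η • (1 : Matrix (Fin d) (Fin d) ℝ) - Sgt).PosSemidef)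
    (horth : Sle * Sgt = 0)
    (lam : ℝ) (hlam : 0 < lam)
    (θ θgt : Fin d → ℝ)
    (hproj : ∀ w, (θ - θgt) ⬝ᵥ Sgt.mulVec w = 0) :
    lam * (θ ⬝ᵥ ((Sle + Sgt) * (Sle + Sgt + lam • 1)⁻¹).mulVec θ) ≤
        (lam / μ0) * (θ ⬝ᵥ (Sle + Sgt).mulVec θ) + η * ∑ j, θgt j ^ 2 ∧
      ((Sle + Sgt).trace - d * η) / r ≤ μ0 := by
  refine ⟨smul_dotProduct_mul_inv_mulVec_le_of_spike hle hgt hμ0 heig hη horth hlam hproj, ?_⟩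
  have htrace : (Sle + Sgt).trace ≤ r * μ0 + d * η := by
    rw [trace_add, hle.1.trace_eq_rank_mul_of_eigenvalues heig, hrank]
    simpa using trace_le_card_mul_of_posSemidef_smul_one_sub hη
  exact div_le_of_le_mul₀ (Nat.cast_nonneg r) hμ0.le (by linarith)

theorem stmt17 {d : ℕ} (r : ℕ)
    (Sle Sgt : Matrix (Fin d) (Fin d) ℝ)
    (hle : Sle.PosSemidef) (hgt : Sgt.PosSemidef)
    (hrank : Sle.rank = r)
    (μ0 : ℝ) (hμ0 : 0 < μ0)
    (heig : ∀ i, hle.1.eigenvalues i = 0 ∨ hle.1.eigenvalues i = μ0)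
    (η : ℝ) (hη : (η • (1 : Matrix (Fin d) (Fin d) ℝ) - Sgt).PosSemidef)
    (horth : Sle * Sgt = 0)
    (lam : ℝ) (hlam : 0 < lam)
    (θ θgt : Fin d → ℝ)
    (hrange : ∃ w, Sgt.mulVec w = θgt)
    (hproj : ∀ w, (θ - θgt) ⬝ᵥ Sgt.mulVec w = 0) :
    lam * (θ ⬝ᵥ ((Sle + Sgt) * (Sle + Sgt + lam • 1)⁻¹).mulVec θ) ≤
        (lam / μ0) * (θ ⬝ᵥ (Sle + Sgt).mulVec θ) + η * ∑ j, θgt j ^ 2 ∧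
      ((Sle + Sgt).trace - d * η) / r ≤ μ0 :=
  stmt17_general r Sle Sgt hle hgt hrank μ0 hμ0 heig η hη horth lam hlam θ θgt hproj
end

section
/- Under ho-MCAR masking (P ∼ Bernoulli(ρ)^{⊗d} independent of X) with Σ_imp := E[(P⊙X)(P⊙X)ᵀ] = Σ_P ⊙ Σ where Σ_P = E[PPᵀ], every eigenvalue of Σ_imp is at least ρ(1−ρ)·min_j E[X_j²]. Consequently, if E[X_j²] ≥ ℓ² for all j, then Σ_imp ⪰ ρ(1−ρ)ℓ² I. -/
/-!
Writing the masking second-moment matrix as `Σ_P = ρ(1 - ρ) I + ρ² 𝟙𝟙ᵀ`, the Hadamard product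
splits as `Σ_P ⊙ Σ = ρ(1 - ρ) diag(Σ) + ρ² Σ`. The second summand is positive semidefinite, and
`diag(Σ) ⪰ (min_j Σ_jj) I`, so `Σ_P ⊙ Σ ⪰ ρ(1 - ρ) (min_j Σ_jj) I`.
-/

open Matrix

namespace Matrix

variable {n R : Type*} [DecidableEq n]

theorem of_ite_hadamard [CommRing R] (a b : R) (S : Matrix n n R) :
    (of fun i j => if i = j then a else b) ⊙ S = diagonal (fun j => (a - b) * S j j) + b • S := by
  ext i j
  by_cases h : i = j
  · subst h
    simp only [hadamard_apply, of_apply, if_true, add_apply, diagonal_apply_eq, smul_apply,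
      smul_eq_mul]
    ring
  · simp [h]

theorem PosSemidef.of_ite_hadamard_sub_smul_one [Fintype n] [CommRing R] [PartialOrder R]
    [StarRing R] [StarOrderedRing R] [IsOrderedRing R] {a b c : R} (hba : b ≤ a) (hb : 0 ≤ b)
    {S : Matrix n n R} (hS : S.PosSemidef) (hc : ∀ j, c ≤ S j j) :
    ((of fun i j => if i = j then a else b) ⊙ S -
      ((a - b) * c) • (1 : Matrix n n R)).PosSemidef := by
  have hdiag : (of fun i j => if i = j then a else b) ⊙ S - ((a - b) * c) • (1 : Matrix n n R) =
      diagonal (fun j => (a - b) * (S j j - c)) + b • S := by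
    rw [of_ite_hadamard, smul_one_eq_diagonal, add_sub_right_comm, diagonal_sub]
    simp only [mul_sub]
  rw [hdiag]
  refine .add (posSemidef_diagonal_iff.2 fun j => ?_) (hS.smul hb)
  exact mul_nonneg (sub_nonneg.2 hba) (sub_nonneg.2 (hc j))

end Matrix

theorem stmt18_general {d : ℕ}
    (ρ l : ℝ) (hρpos : 0 < ρ) (hρlt : ρ < 1)
    (Sig : Matrix (Fin d) (Fin d) ℝ) (hSig : Sig.PosSemidef)
    (SigP : Matrix (Fin d) (Fin d) ℝ)
    (hSigP : SigP = Matrix.of fun i j => if i = j then ρ else ρ ^ 2)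
    (hl : ∀ j, l ^ 2 ≤ Sig j j) :
    (SigP.hadamard Sig -
        (ρ * (1 - ρ) * ⨅ j, Sig j j) • (1 : Matrix (Fin d) (Fin d) ℝ)).PosSemidef ∧
      (SigP.hadamard Sig -
        (ρ * (1 - ρ) * l ^ 2) • (1 : Matrix (Fin d) (Fin d) ℝ)).PosSemidef := by
  have lower_bound : ∀ c, (∀ j, c ≤ Sig j j) →
      (SigP.hadamard Sig - (ρ * (1 - ρ) * c) • (1 : Matrix (Fin d) (Fin d) ℝ)).PosSemidef := by
    intro c hc
    have hρ2 : ρ ^ 2 ≤ ρ := by nlinarith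
    have h := hSig.of_ite_hadamard_sub_smul_one hρ2 (sq_nonneg ρ) hc
    rwa [hSigP, ← show ρ - ρ ^ 2 = ρ * (1 - ρ) by ring]
  exact ⟨lower_bound _ fun j => ciInf_le (Set.finite_range _).bddBelow j, lower_bound _ hl⟩

theorem stmt18 {d : ℕ} (hd : 0 < d)
    (ρ l : ℝ) (hρpos : 0 < ρ) (hρlt : ρ < 1)
    (Sig : Matrix (Fin d) (Fin d) ℝ) (hSig : Sig.PosSemidef)
    (SigP : Matrix (Fin d) (Fin d) ℝ)
    (hSigP : SigP = Matrix.of fun i j => if i = j then ρ else ρ ^ 2)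
    (hl : ∀ j, l ^ 2 ≤ Sig j j) :
    (SigP.hadamard Sig -
        (ρ * (1 - ρ) * ⨅ j, Sig j j) • (1 : Matrix (Fin d) (Fin d) ℝ)).PosSemidef ∧
      (SigP.hadamard Sig -
        (ρ * (1 - ρ) * l ^ 2) • (1 : Matrix (Fin d) (Fin d) ℝ)).PosSemidef :=
  stmt18_general ρ l hρpos hρlt Sig hSig SigP hSigP hl
end
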